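/- arXiv:2203.11017 — 5 statements merged into one kernel-verified Lean document; each statement's English description precedes it below -/
import Mathlib

section
/- Let {a, b} be a 2-element generating set of a finite abelian group G, and let k and ℓ′ be integers such that 0 ≤ k, ℓ′ < |G| and |k − ℓ′| ≤ 1. Then there exist two arc-disjoint spanning quasi-paths P and P′ in Cay(G; a, b) such that δ_b(P) = k and δ_a(P′) = ℓ′. -/
/-- A spanning quasi-path of `Cay(G; a, b)` with terminal vertex `τ`: an injective map
`f : G ∖ {τ} → G` with every step by `a` or by `b`. -/
def IsQuasiPath {G : Type*} [AddCommGroup G] (a b : G) (τ : G)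
    (f : {x : G // x ≠ τ} → G) : Prop :=
  Function.Injective f ∧ ∀ x, f x - (x : G) ∈ ({a, b} : Set G)

/-- `δ_s` of a quasi-path: the number of vertices that travel by `s`. -/
noncomputable def qDelta {G : Type*} [AddCommGroup G] (τ : G) (f : {x : G // x ≠ τ} → G) (s : G) : ℕ :=
  Nat.card {x : {x : G // x ≠ τ} // f x = (x : G) + s}

/-- The arc set of a quasi-path. -/
def qArcSet {G : Type*} (τ : G) (f : {x : G // x ≠ τ} → G) : Set (G × G) :=
  {p | ∃ x : {x : G // x ≠ τ}, p = ((x : G), f x)}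

/-!
A set `S ⊆ G` with `τ ∉ S` gives the quasi-path ending at `τ` that steps by `b` on `S` and by
`a` elsewhere. Two of its arcs can only collide as `x + b = y + a` with `x ∈ S`, `y ∉ S`, i.e.
`y = x + (b - a)`; so it is injective as soon as translation by `d = b - a` maps `S` into
`S ∪ {τ}`, and then `δ_b = |S|`. Likewise a set `S'` mapped into `S' ∪ {τ'}` by translation by
`-d` gives a quasi-path stepping by `a` on `S'` with `δ_a = |S'|`, and the two quasi-paths are
arc-disjoint when `S` and `S'` agree off `{τ, τ'}`.

Such sets `S` of every size `k < |G|` arise by repeatedly adding the terminal vertex to `S`. A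
counting argument shows that a set mapped into `S ∪ {σ}` by `+d` is also mapped into
`S ∪ {τ'}` by `-d` for some `τ' ∉ S`; applied to `S' = S` and to `S' = S ∪ {τ}` it settles
`ℓ' ∈ {k, k + 1}`, and `ℓ' = k - 1` is the same case with `d` replaced by `-d`.
-/

open Set

section FlowSets

variable {G : Type*} [AddCommGroup G]

def FlowsInto (d : G) (S : Set G) (τ : G) : Prop :=
  τ ∉ S ∧ MapsTo (· + d) S (insert τ S)

lemma mapsTo_add_insert {d τ : G} {S : Set G} (h : MapsTo (· + d) S (insert τ S)) :
    MapsTo (· + d) (insert τ S) (insert (τ + d) (insert τ S)) := by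
  rintro x (rfl | hx)
  · exact mem_insert _ _
  · exact mem_insert_of_mem _ (h hx)

lemma exists_flowsInto_of_mapsTo {d σ : G} {S : Set G} (hS : S ≠ univ)
    (h : MapsTo (· + d) S (insert σ S)) : ∃ τ, FlowsInto d S τ := by
  by_cases hσ : σ ∈ S
  · obtain ⟨τ, hτ⟩ := (ne_univ_iff_exists_notMem S).1 hS
    exact ⟨τ, hτ, h.mono_right (by simp [hσ])⟩
  · exact ⟨σ, hσ, h⟩

lemma exists_flowsInto_neg [Finite G] {d σ : G} {S : Set G} (hS : S ≠ univ)
    (h : MapsTo (· + d) S (insert σ S)) : ∃ τ, FlowsInto (-d) S τ := by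
  by_cases hback : MapsTo (· + -d) S S
  · obtain ⟨τ, hτ⟩ := (ne_univ_iff_exists_notMem S).1 hS
    exact ⟨τ, hτ, hback.mono_right (subset_insert _ _)⟩
  obtain ⟨y, hyS, hy⟩ : ∃ y ∈ S, y + -d ∉ S := by simpa [MapsTo] using hback
  refine ⟨y + -d, hy, fun x hxS => ?_⟩
  by_contra hx
  rw [mem_insert_iff, not_or] at hx
  have hxy : x ≠ y := fun e => hx.1 (by rw [e])
  -- neither `x` nor `y` is hit, so `+d` maps `S` injectively into a set of size `≤ |S| - 1`
  have hmaps : MapsTo (· + d) S (insert σ S \ {x, y}) := by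
    intro z hz
    refine ⟨h hz, ?_⟩
    simp only [mem_insert_iff, mem_singleton_iff]
    rintro (rfl | rfl)
    · exact hx.2 (by simpa using hz)
    · exact hy (by simpa using hz)
  have hpair : {x, y} ⊆ insert σ S :=
    pair_subset (mem_insert_of_mem _ hxS) (mem_insert_of_mem _ hyS)
  have hle := ncard_le_ncard_of_injOn _ hmaps (add_left_injective d).injOn
  have hpair_le := ncard_le_ncard hpair
  have hinsert_le := ncard_insert_le σ S
  rw [ncard_sdiff hpair, ncard_pair hxy] at hle
  rw [ncard_pair hxy] at hpair_le
  omega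

lemma exists_flowsInto_ncard_eq [Finite G] (d : G) :
    ∀ {k : ℕ}, k < Nat.card G → ∃ S τ, FlowsInto d S τ ∧ S.ncard = k
  | 0, _ => ⟨∅, 0, ⟨notMem_empty _, mapsTo_empty _ _⟩, ncard_empty _⟩
  | k + 1, hk => by
    obtain ⟨S, τ, ⟨hτ, hS⟩, rfl⟩ := exists_flowsInto_ncard_eq d (k := k) (by omega)
    have hcard : (insert τ S).ncard = S.ncard + 1 := ncard_insert_of_notMem hτ
    have hne : insert τ S ≠ univ := fun e => by rw [e, ncard_univ] at hcard; omega
    obtain ⟨τ₁, h₁⟩ := exists_flowsInto_of_mapsTo hne (mapsTo_add_insert hS)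
    exact ⟨_, τ₁, h₁, hcard⟩

lemma exists_flowsInto_pair_of_le [Finite G] (d : G) {k l : ℕ} (hkl : k ≤ l) (hlk : l ≤ k + 1)
    (hl : l < Nat.card G) :
    ∃ S τ S' τ', FlowsInto d S τ ∧ FlowsInto (-d) S' τ' ∧ S.ncard = k ∧ S'.ncard = l ∧
      ∀ x, x ≠ τ → x ≠ τ' → (x ∈ S ↔ x ∈ S') := by
  obtain ⟨S, τ, hS, rfl⟩ := exists_flowsInto_ncard_eq d (k := k) (by omega)
  obtain rfl | rfl : l = S.ncard ∨ l = S.ncard + 1 := by omega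
  · obtain ⟨τ', hS'⟩ := exists_flowsInto_neg ((ne_univ_iff_exists_notMem S).2 ⟨τ, hS.1⟩) hS.2
    exact ⟨S, τ, S, τ', hS, hS', rfl, rfl, fun _ _ _ => Iff.rfl⟩
  · have hcard : (insert τ S).ncard = S.ncard + 1 := ncard_insert_of_notMem hS.1
    have hne : insert τ S ≠ univ := fun e => by rw [e, ncard_univ] at hcard; omega
    obtain ⟨τ', hS'⟩ := exists_flowsInto_neg hne (mapsTo_add_insert hS.2)
    exact ⟨S, τ, insert τ S, τ', hS, hS', rfl, hcard, fun x hx _ => by simp [hx]⟩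

lemma exists_flowsInto_pair [Finite G] (d : G) {k l : ℕ} (hk : k < Nat.card G)
    (hl : l < Nat.card G) (hkl : k ≤ l + 1) (hlk : l ≤ k + 1) :
    ∃ S τ S' τ', FlowsInto d S τ ∧ FlowsInto (-d) S' τ' ∧ S.ncard = k ∧ S'.ncard = l ∧
      ∀ x, x ≠ τ → x ≠ τ' → (x ∈ S ↔ x ∈ S') := by
  rcases le_total k l with h | h
  · exact exists_flowsInto_pair_of_le d h hlk hl
  obtain ⟨S', τ', S, τ, hS', hS, hl', hk', hagree⟩ := exists_flowsInto_pair_of_le (-d) h hkl hk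
  rw [neg_neg] at hS
  exact ⟨S, τ, S', τ', hS, hS', hk', hl', fun x hτ hτ' => (hagree x hτ' hτ).symm⟩

end FlowSets

section StepMap

variable {G : Type*} [AddCommGroup G]

open Classical in
noncomputable def stepMap (S : Set G) (t s τ : G) : {x : G // x ≠ τ} → G :=
  fun x => if (x : G) ∈ S then x + t else x + s

lemma isQuasiPath_stepMap {a b t s τ : G} {S : Set G} (ht : t ∈ ({a, b} : Set G))
    (hs : s ∈ ({a, b} : Set G)) (hS : MapsTo (· + (t - s)) S (insert τ S)) :
    IsQuasiPath a b τ (stepMap S t s τ) := by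
  have cross : ∀ x y : {x : G // x ≠ τ}, (x : G) ∈ S → (y : G) ∉ S → (x : G) + t ≠ y + s := by
    intro x y hx hy e
    have hy' : (y : G) ∈ insert τ S := by
      convert hS hx using 1
      rw [eq_sub_of_add_eq e.symm, add_sub_assoc]
    exact hy'.elim y.2 hy
  refine ⟨fun x y hxy => ?_, fun x => ?_⟩
  · simp only [stepMap] at hxy
    split_ifs at hxy with hx hy hy
    · exact Subtype.ext (add_right_cancel hxy)
    · exact absurd hxy (cross x y hx hy)
    · exact absurd hxy.symm (cross y x hy hx)
    · exact Subtype.ext (add_right_cancel hxy)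
  · simp only [stepMap]
    split_ifs <;> simpa

lemma qDelta_stepMap {t s τ : G} {S : Set G} (hts : t ≠ s) (hτ : τ ∉ S) :
    qDelta τ (stepMap S t s τ) t = S.ncard := by
  have key : ∀ x : {x : G // x ≠ τ}, stepMap S t s τ x = x + t ↔ (x : G) ∈ S := by
    intro x
    simp only [stepMap]
    split_ifs with h <;> simp [h, hts.symm]
  rw [qDelta, ← Nat.card_coe_set_eq]
  exact Nat.card_congr ((Equiv.subtypeEquivRight key).trans
    (Equiv.subtypeSubtypeEquivSubtype fun hx e => hτ (e ▸ hx)))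

lemma disjoint_qArcSet_stepMap {a b τ τ' : G} {S S' : Set G} (hab : a ≠ b)
    (hSS' : ∀ x, x ≠ τ → x ≠ τ' → (x ∈ S ↔ x ∈ S')) :
    Disjoint (qArcSet τ (stepMap S b a τ)) (qArcSet τ' (stepMap S' a b τ')) := by
  rw [Set.disjoint_left]
  rintro _ ⟨x, rfl⟩ ⟨y, hxy⟩
  obtain ⟨hx, hf⟩ : (x : G) = y ∧ stepMap S b a τ x = stepMap S' a b τ' y := Prod.ext_iff.1 hxy
  have hiff := hSS' y (hx ▸ x.2) y.2
  simp only [stepMap] at hf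
  rw [hx] at hf
  by_cases hxS : (y : G) ∈ S
  · simp [hxS, hiff.1 hxS, hab.symm] at hf
  · simp [hxS, mt hiff.2 hxS, hab] at hf

end StepMap

theorem arc_disjoint_quasi_paths_general {G : Type*} [AddCommGroup G] [Fintype G] (a b : G)
    (hab : a ≠ b) (k l' : ℕ)
    (hk : k < Fintype.card G) (hl' : l' < Fintype.card G)
    (hkl : |(k : ℤ) - (l' : ℤ)| ≤ 1) :
    ∃ (τ : G) (f : {x : G // x ≠ τ} → G) (τ' : G) (f' : {x : G // x ≠ τ'} → G),
      IsQuasiPath a b τ f ∧ IsQuasiPath a b τ' f' ∧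
      Disjoint (qArcSet τ f) (qArcSet τ' f') ∧
      qDelta τ f b = k ∧ qDelta τ' f' a = l' := by
  rw [← Nat.card_eq_fintype_card] at hk hl'
  obtain ⟨hkl₁, hkl₂⟩ := abs_le.1 hkl
  obtain ⟨S, τ, S', τ', hS, hS', rfl, rfl, hSS'⟩ :=
    exists_flowsInto_pair (b - a) hk hl' (by omega) (by omega)
  rw [neg_sub] at hS'
  exact ⟨τ, stepMap S b a τ, τ', stepMap S' a b τ',
    isQuasiPath_stepMap (by simp) (by simp) hS.2, isQuasiPath_stepMap (by simp) (by simp) hS'.2,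
    disjoint_qArcSet_stepMap hab hSS', qDelta_stepMap hab.symm hS.1, qDelta_stepMap hab hS'.1⟩

/-- If `{a, b}` generates the finite abelian group `G`, and `0 ≤ k, ℓ' < |G|` with
`|k − ℓ'| ≤ 1`, then there are two arc-disjoint spanning quasi-paths `P`, `P'` in
`Cay(G; a, b)` with `δ_b(P) = k` and `δ_a(P') = ℓ'`. -/
theorem arc_disjoint_quasi_paths {G : Type*} [AddCommGroup G] [Fintype G] (a b : G)
    (hab : a ≠ b) (hgen : AddSubgroup.closure {a, b} = ⊤) (k l' : ℕ)
    (hk : k < Fintype.card G) (hl' : l' < Fintype.card G)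
    (hkl : |(k : ℤ) - (l' : ℤ)| ≤ 1) :
    ∃ (τ : G) (f : {x : G // x ≠ τ} → G) (τ' : G) (f' : {x : G // x ≠ τ'} → G),
      IsQuasiPath a b τ f ∧ IsQuasiPath a b τ' f' ∧
      Disjoint (qArcSet τ f) (qArcSet τ' f') ∧
      qDelta τ f b = k ∧ qDelta τ' f' a = l' :=
  arc_disjoint_quasi_paths_general a b hab k l' hk hl' hkl
end

section
/- Let {a, b} be a 2-element generating set of a finite abelian group G, and let P and P′ be spanning quasi-paths in Cay(G; a, b) with δ_b(P) = δ_b(P′). If P is a hamiltonian path, then P′ is also a hamiltonian path. -/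
/-- A quasi-path `(f, τ)` is a hamiltonian path: there is a bijective listing
`v : Fin |G| → G` ending at `τ` that follows `f`. -/
def QuasiIsHamPath {G : Type*} [AddCommGroup G] [Fintype G] (τ : G)
    (f : {x : G // x ≠ τ} → G) : Prop :=
  ∃ v : Fin (Fintype.card G) → G, Function.Bijective v ∧
    (∀ j : Fin (Fintype.card G), (j : ℕ) = Fintype.card G - 1 → v j = τ) ∧
    ∀ (i : ℕ) (h : i + 1 < Fintype.card G),
      ∃ hne : v ⟨i, Nat.lt_of_succ_lt h⟩ ≠ τ,
        f ⟨v ⟨i, Nat.lt_of_succ_lt h⟩, hne⟩ = v ⟨i + 1, h⟩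

open AddSubgroup

section Helpers

variable {A : Type*} [AddGroup A]

lemma exists_nsmul_eq_zsmul (g : A) (hm : 0 < addOrderOf g) (z : ℤ) :
    ∃ j : ℕ, j < addOrderOf g ∧ (j : ℕ) • g = z • g := by
  set m := addOrderOf g with hmdef
  refine ⟨(z % (m : ℤ)).toNat, ?_, ?_⟩
  · have h1 : (0:ℤ) ≤ z % (m:ℤ) := Int.emod_nonneg z (by exact_mod_cast hm.ne')
    have h2 : z % (m:ℤ) < m := Int.emod_lt_of_pos z (by exact_mod_cast hm)
    omega
  · have h1 : (0:ℤ) ≤ z % (m:ℤ) := Int.emod_nonneg z (by exact_mod_cast hm.ne')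
    have key : (((z % (m:ℤ)).toNat : ℤ)) • g = z • g := by
      have h2 : ((z % (m:ℤ)).toNat : ℤ) = z % (m:ℤ) := Int.toNat_of_nonneg h1
      have hz : z = z % m + (z / m) * m := by
        have := Int.mul_ediv_add_emod z m; linarith
      have hmg : ((m:ℤ)) • g = 0 := by
        rw [natCast_zsmul, hmdef, addOrderOf_nsmul_eq_zero]
      rw [h2]
      conv_rhs => rw [hz]
      rw [add_zsmul, mul_zsmul, hmg, smul_zero, add_zero]
    rw [← key, natCast_zsmul]

lemma nsmul_inj_of_lt_addOrder {g : A} {i j : ℕ} (hi : i < addOrderOf g)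
    (hj : j < addOrderOf g) (h : i • g = j • g) : i = j := by
  wlog hle : i ≤ j generalizing i j
  · exact (this hj hi h.symm (by omega)).symm
  have hz : (j - i) • g = 0 := by
    rw [sub_nsmul g hle, h]; simp
  have hdvd := addOrderOf_dvd_of_nsmul_eq_zero hz
  rcases Nat.eq_zero_or_pos (j - i) with h0 | hpos
  · omega
  · have := Nat.le_of_dvd hpos hdvd; omega

end Helpers


namespace QPaux

set_option linter.unusedSectionVars false

variable {G : Type*} [AddCommGroup G] [Fintype G]

/-- the set of vertices that travel by `b`. -/
def B (b τ : G) (f : {x : G // x ≠ τ} → G) : Set G :=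
  {x | ∃ h : x ≠ τ, f ⟨x, h⟩ = x + b}

variable {a b τ : G} {f : {x : G // x ≠ τ} → G}

lemma tau_not_mem_B : τ ∉ B b τ f := fun ⟨h, _⟩ => h rfl

lemma ne_tau_of_mem_B {x : G} (hx : x ∈ B b τ f) : x ≠ τ := hx.1

lemma f_eq_of_mem_B {x : G} (hx : x ∈ B b τ f) (h : x ≠ τ) : f ⟨x, h⟩ = x + b := hx.2

lemma f_eq_of_not_mem_B (hf : IsQuasiPath a b τ f) {x : G} (hx : x ∉ B b τ f)
    (h : x ≠ τ) : f ⟨x, h⟩ = x + a := by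
  rcases hf.2 ⟨x, h⟩ with h1 | h1
  · simp only at h1; rw [sub_eq_iff_eq_add] at h1; rw [h1]; abel
  · exfalso; apply hx
    refine ⟨h, ?_⟩
    simp only [Set.mem_singleton_iff] at h1
    rw [sub_eq_iff_eq_add] at h1; rw [h1]; abel

lemma card_B_eq_qDelta : Nat.card (B b τ f) = qDelta τ f b := by
  apply Nat.card_congr
  exact {
    toFun := fun x => ⟨⟨x.1, x.2.1⟩, x.2.2⟩
    invFun := fun x => ⟨x.1.1, x.1.2, x.2⟩
    left_inv := fun x => rfl
    right_inv := fun x => rfl }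

/-- key structural step coming from injectivity -/
lemma step_B (hf : IsQuasiPath a b τ f) (hab : a ≠ b) {x : G} (hx : x ∈ B b τ f) :
    x + (b - a) = τ ∨ x + (b - a) ∈ B b τ f := by
  by_contra hcon
  push_neg at hcon
  obtain ⟨h1, h2⟩ := hcon
  have hy : f ⟨x + (b - a), h1⟩ = (x + (b-a)) + a := f_eq_of_not_mem_B hf h2 h1
  have hx' : f ⟨x, hx.1⟩ = x + b := hx.2
  have : f ⟨x + (b - a), h1⟩ = f ⟨x, hx.1⟩ := by
    rw [hy, hx']; abel
  have heq := hf.1 this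
  have heq2 : x + (b - a) = x := congrArg Subtype.val heq
  apply hab
  have h0 : b - a = 0 := by
    have : x + (b - a) = x + 0 := by rw [add_zero]; exact heq2
    exact add_left_cancel this
  exact (sub_eq_zero.mp h0).symm


lemma d_pos (hab : a ≠ b) : 0 < addOrderOf (b - a) := by
  apply addOrderOf_pos

lemma d_ne_zero (hab : a ≠ b) : b - a ≠ 0 := sub_ne_zero.mpr (Ne.symm hab)

lemma mk_nsmul_d (x : G) (j : ℕ) :
    (QuotientAddGroup.mk (x + j • (b - a)) : G ⧸ zmultiples (b - a)) = QuotientAddGroup.mk x := by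
  rw [QuotientAddGroup.eq_iff_sub_mem]
  have : x + j • (b - a) - x = j • (b - a) := by abel
  rw [this]
  exact mem_zmultiples_iff.mpr ⟨j, natCast_zsmul _ _⟩

lemma mk_sub_nsmul_d (x : G) (j : ℕ) :
    (QuotientAddGroup.mk (x - j • (b - a)) : G ⧸ zmultiples (b - a)) = QuotientAddGroup.mk x := by
  rw [QuotientAddGroup.eq_iff_sub_mem]
  have : x - j • (b - a) - x = (-(j:ℤ)) • (b - a) := by
    rw [neg_zsmul, natCast_zsmul]; abel
  rw [this]
  exact mem_zmultiples_iff.mpr ⟨-(j:ℤ), rfl⟩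

/-- every element of `B` in a coset not containing `τ` forces the whole coset inside `B` -/
lemma full_coset (hf : IsQuasiPath a b τ f) (hab : a ≠ b) {x : G} (hx : x ∈ B b τ f)
    (hxτ : (QuotientAddGroup.mk x : G ⧸ zmultiples (b - a)) ≠ QuotientAddGroup.mk τ)
    {y : G} (hy : (QuotientAddGroup.mk y : G ⧸ zmultiples (b - a)) = QuotientAddGroup.mk x) :
    y ∈ B b τ f := by
  have chain : ∀ j : ℕ, x + j • (b - a) ∈ B b τ f := by
    intro j
    induction j with
    | zero => simpa using hx
    | succ n ih =>
      rcases step_B hf hab ih with h | h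
      · exfalso
        apply hxτ
        have h2 := mk_nsmul_d (b := b) (a := a) x (n + 1)
        have h3 : x + (n+1) • (b - a) = x + n • (b - a) + (b - a) := by
          rw [succ_nsmul]; abel
        rw [h3, h] at h2
        exact h2.symm
      · have h3 : x + (n+1) • (b - a) = x + n • (b - a) + (b - a) := by
          rw [succ_nsmul]; abel
        rw [h3]; exact h
  -- now express y as x + j • d
  have hyx : y - x ∈ zmultiples (b - a) := by
    rw [← QuotientAddGroup.eq_iff_sub_mem]; exact hy
  obtain ⟨z, hz⟩ := mem_zmultiples_iff.mp hyx
  obtain ⟨j, _, hj⟩ := exists_nsmul_eq_zsmul (b - a) (d_pos hab) z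
  have hyj : y = x + j • (b - a) := by
    have h4 : j • (b - a) = y - x := hj.trans hz
    rw [h4]; abel
  rw [hyj]; exact chain j

/-- the segment predicate -/
def segP (a b τ : G) (f : {x : G // x ≠ τ} → G) (c : ℕ) : Prop :=
  ∀ i : ℕ, 1 ≤ i → i ≤ c → τ - i • (b - a) ∈ B b τ f

/-- the length of the segment of `B` preceding `τ` -/
noncomputable def L (a b τ : G) (f : {x : G // x ≠ τ} → G) : ℕ :=
  @Nat.findGreatest (segP a b τ f) (Classical.decPred _) (addOrderOf (b - a) - 1)

lemma L_le : L a b τ f ≤ addOrderOf (b - a) - 1 := @Nat.findGreatest_le (segP a b τ f) (Classical.decPred _) _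

lemma seg_mem {i : ℕ} (h1 : 1 ≤ i) (h2 : i ≤ L a b τ f) : τ - i • (b - a) ∈ B b τ f := by
  have h0 : segP a b τ f 0 := by intro i hi1 hi0; omega
  have := @Nat.findGreatest_spec 0 (segP a b τ f) (Classical.decPred _)
    (addOrderOf (b - a) - 1) (Nat.zero_le _) h0
  exact this i h1 h2

lemma mem_seg (hf : IsQuasiPath a b τ f) (hab : a ≠ b) {x : G} (hx : x ∈ B b τ f)
    (hxτ : (QuotientAddGroup.mk x : G ⧸ zmultiples (b - a)) = QuotientAddGroup.mk τ) :
    ∃ i : ℕ, 1 ≤ i ∧ i ≤ L a b τ f ∧ x = τ - i • (b - a) := by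
  classical
  set k := addOrderOf (b - a) with hk
  have hkpos : 0 < k := d_pos hab
  have hτx : τ - x ∈ zmultiples (b - a) := by
    have : x - τ ∈ zmultiples (b - a) := by
      rw [← QuotientAddGroup.eq_iff_sub_mem]; exact hxτ
    have := neg_mem this
    simpa using this
  obtain ⟨z, hz⟩ := mem_zmultiples_iff.mp hτx
  obtain ⟨j, hjk, hj⟩ := exists_nsmul_eq_zsmul (b - a) hkpos z
  have hxj : x = τ - j • (b - a) := by
    have h4 : j • (b - a) = τ - x := hj.trans hz
    rw [h4]; abel
  have hjne : j ≠ 0 := by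
    intro h0
    rw [h0] at hxj
    simp at hxj
    exact hx.1 hxj
  -- downward chain
  have key : ∀ s : ℕ, s ≤ j - 1 → τ - (j - s) • (b - a) ∈ B b τ f := by
    intro s
    induction s with
    | zero => intro _; simpa [← hxj] using hx
    | succ n ih =>
      intro hs
      have ihh := ih (by omega)
      rcases step_B hf hab ihh with h | h
      · exfalso
        have harith : τ - (j - n) • (b - a) + (b - a) = τ - (j - (n+1)) • (b - a) := by
          have : (j - n) = (j - (n+1)) + 1 := by omega
          rw [this, succ_nsmul]; abel
        rw [harith] at h
        have : (j - (n+1)) • (b - a) = 0 := sub_eq_self.mp h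
        have hdvd := addOrderOf_dvd_of_nsmul_eq_zero this
        have h1 : 1 ≤ j - (n+1) := by omega
        have h2 : j - (n+1) < k := by omega
        rw [← hk] at hdvd
        have := Nat.le_of_dvd (by omega) hdvd
        omega
      · have harith : τ - (j - n) • (b - a) + (b - a) = τ - (j - (n+1)) • (b - a) := by
          have : (j - n) = (j - (n+1)) + 1 := by omega
          rw [this, succ_nsmul]; abel
        rw [harith] at h; exact h
  have hP : ∀ i : ℕ, 1 ≤ i → i ≤ j → τ - i • (b - a) ∈ B b τ f := by
    intro i h1 h2
    have := key (j - i) (by omega)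
    have heq : j - (j - i) = i := by omega
    rw [heq] at this; exact this
  have hjL : j ≤ L a b τ f :=
    @Nat.le_findGreatest _ (segP a b τ f) (Classical.decPred _) _ (by omega) hP
  exact ⟨j, by omega, hjL, hxj⟩


/-- a coset fully contained in `B` -/
def Full (a b τ : G) (f : {x : G // x ≠ τ} → G) (q : G ⧸ zmultiples (b - a)) : Prop :=
  ∀ y : G, QuotientAddGroup.mk y = q → y ∈ B b τ f

noncomputable def R (a b τ : G) (f : {x : G // x ≠ τ} → G) : ℕ :=
  Nat.card {q : G ⧸ zmultiples (b - a) // Full a b τ f q}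

lemma not_full_tau : ¬ Full a b τ f (QuotientAddGroup.mk τ) := by
  intro h
  exact (h τ rfl).1 rfl

lemma fiber_ncard (q : G ⧸ zmultiples (b - a)) :
    Nat.card {x : G // (QuotientAddGroup.mk x : G ⧸ zmultiples (b - a)) = q}
      = addOrderOf (b - a) := by
  obtain ⟨x₀, rfl⟩ := QuotientAddGroup.mk_surjective q
  have e : {x : G // (QuotientAddGroup.mk x : G ⧸ zmultiples (b - a)) = QuotientAddGroup.mk x₀}
      ≃ (zmultiples (b - a)) := {
    toFun := fun x => ⟨x.1 - x₀, by
      have := x.2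
      rw [QuotientAddGroup.eq_iff_sub_mem] at this
      exact this⟩
    invFun := fun h => ⟨x₀ + h.1, by
      rw [QuotientAddGroup.eq_iff_sub_mem]
      have : x₀ + h.1 - x₀ = h.1 := by abel
      rw [this]; exact h.2⟩
    left_inv := fun x => by ext; simp
    right_inv := fun h => by ext; simp }
  rw [Nat.card_congr e, Nat.card_zmultiples]

lemma card_B (hf : IsQuasiPath a b τ f) (hab : a ≠ b) :
    Nat.card (B b τ f) = addOrderOf (b - a) * R a b τ f + L a b τ f := by
  classical
  set k := addOrderOf (b - a) with hk
  set Bfin : Finset G := Finset.univ.filter (· ∈ B b τ f) with hBfin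
  have hcard1 : Nat.card (B b τ f) = Bfin.card := by
    rw [Nat.card_eq_fintype_card, ← Set.toFinset_card]
    congr 1
    ext x
    simp [hBfin]
  have hcard2 : R a b τ f = (Finset.univ.filter (Full a b τ f)).card := by
    rw [R, Nat.card_eq_fintype_card, Fintype.card_subtype]
  have hfib := Finset.card_eq_sum_card_fiberwise
    (f := fun x : G => (QuotientAddGroup.mk x : G ⧸ zmultiples (b - a)))
    (s := Bfin) (t := Finset.univ) (fun x _ => Finset.mem_univ _)
  rw [hcard1, hfib]
  rw [← Finset.sum_filter_add_sum_filter_not Finset.univ (Full a b τ f)]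
  have hfull : ∀ q ∈ Finset.univ.filter (Full a b τ f),
      (Bfin.filter (fun x => (QuotientAddGroup.mk x : G ⧸ zmultiples (b - a)) = q)).card = k := by
    intro q hq
    rw [Finset.mem_filter] at hq
    have hyy : Bfin.filter (fun x => (QuotientAddGroup.mk x : G ⧸ zmultiples (b - a)) = q)
        = Finset.univ.filter (fun x => (QuotientAddGroup.mk x : G ⧸ zmultiples (b - a)) = q) := by
      ext x
      simp only [hBfin, Finset.filter_filter, Finset.mem_filter, Finset.mem_univ, true_and]
      constructor
      · rintro ⟨_, h⟩; exact h
      · intro h; exact ⟨hq.2 x h, h⟩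
    rw [hyy]
    have := fiber_ncard (a := a) (b := b) q
    rw [Nat.card_eq_fintype_card, Fintype.card_subtype] at this
    exact this
  have hnotfull : ∀ q ∈ Finset.univ.filter (fun q => ¬ Full a b τ f q),
      (Bfin.filter (fun x => (QuotientAddGroup.mk x : G ⧸ zmultiples (b - a)) = q)).card
        = if q = (QuotientAddGroup.mk τ : G ⧸ zmultiples (b - a)) then L a b τ f else 0 := by
    intro q hq
    rw [Finset.mem_filter] at hq
    by_cases hqτ : q = (QuotientAddGroup.mk τ : G ⧸ zmultiples (b - a))
    · subst hqτ
      rw [if_pos rfl]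
      have hseteq : Bfin.filter (fun x => (QuotientAddGroup.mk x : G ⧸ zmultiples (b - a))
            = QuotientAddGroup.mk τ)
          = (Finset.Icc 1 (L a b τ f)).image (fun i => τ - i • (b - a)) := by
        ext x
        simp only [hBfin, Finset.filter_filter, Finset.mem_filter, Finset.mem_univ, true_and,
          Finset.mem_image, Finset.mem_Icc]
        constructor
        · rintro ⟨hxB, hxq⟩
          obtain ⟨i, h1, h2, h3⟩ := mem_seg hf hab hxB hxq
          exact ⟨i, ⟨h1, h2⟩, h3.symm⟩
        · rintro ⟨i, ⟨h1, h2⟩, rfl⟩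
          exact ⟨seg_mem h1 h2, mk_sub_nsmul_d τ i⟩
      rw [hseteq, Finset.card_image_of_injOn, Nat.card_Icc]
      · omega
      · intro i hi j hj hij
        simp only [Finset.coe_Icc, Set.mem_Icc] at hi hj
        have hkpos := d_pos hab
        have hL := L_le (a := a) (b := b) (τ := τ) (f := f)
        have hik : i < k := by omega
        have hjk : j < k := by omega
        have heqd : i • (b - a) = j • (b - a) := sub_right_injective hij
        exact nsmul_inj_of_lt_addOrder hik hjk heqd
    · rw [if_neg hqτ]
      rw [Finset.card_eq_zero, Finset.filter_eq_empty_iff]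
      intro x hx
      rw [hBfin, Finset.mem_filter] at hx
      intro hxq
      apply hq.2
      intro y hy
      refine full_coset hf hab hx.2 ?_ ?_
      · intro hcon
        exact hqτ (hxq ▸ hcon)
      · rw [hy, ← hxq]
  rw [Finset.sum_congr rfl hfull, Finset.sum_congr rfl hnotfull]
  rw [Finset.sum_const, smul_eq_mul, ← hcard2]
  rw [Finset.sum_ite_eq' (Finset.univ.filter (fun q => ¬ Full a b τ f q))
    ((QuotientAddGroup.mk τ : G ⧸ zmultiples (b - a))) (fun _ => L a b τ f)]
  rw [if_pos (by simpa using not_full_tau (a := a) (f := f))]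
  ring


lemma mk_b_eq_mk_a :
    (QuotientAddGroup.mk b : G ⧸ zmultiples (b - a)) = QuotientAddGroup.mk a := by
  rw [QuotientAddGroup.eq_iff_sub_mem]
  exact mem_zmultiples _

lemma zmult_mk_a (hgen : AddSubgroup.closure {a, b} = ⊤) :
    zmultiples (QuotientAddGroup.mk a : G ⧸ zmultiples (b - a)) = ⊤ := by
  have hsurj : Function.Surjective (QuotientAddGroup.mk' (zmultiples (b - a))) :=
    QuotientAddGroup.mk'_surjective _
  have h1 : map (QuotientAddGroup.mk' (zmultiples (b - a))) ⊤ = ⊤ :=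
    map_top_of_surjective _ hsurj
  rw [← hgen, AddMonoidHom.map_closure] at h1
  have h2 : (QuotientAddGroup.mk' (zmultiples (b - a))) '' {a, b}
      = {(QuotientAddGroup.mk a : G ⧸ zmultiples (b - a))} := by
    rw [Set.image_pair]
    have : (QuotientAddGroup.mk' (zmultiples (b - a))) b = QuotientAddGroup.mk a := by
      rw [QuotientAddGroup.mk'_apply]; exact mk_b_eq_mk_a
    rw [this, QuotientAddGroup.mk'_apply]
    simp
  rw [h2, ← AddSubgroup.zmultiples_eq_closure] at h1
  exact h1

lemma exists_jrep (hgen : AddSubgroup.closure {a, b} = ⊤) (x : G) :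
    ∃ j : ℕ, j < addOrderOf (QuotientAddGroup.mk a : G ⧸ zmultiples (b - a)) ∧
      (QuotientAddGroup.mk x : G ⧸ zmultiples (b - a))
        = QuotientAddGroup.mk τ + j • QuotientAddGroup.mk a := by
  set abar := (QuotientAddGroup.mk a : G ⧸ zmultiples (b - a))
  have hm : 0 < addOrderOf abar := addOrderOf_pos _
  have : (QuotientAddGroup.mk x - QuotientAddGroup.mk τ : G ⧸ zmultiples (b - a))
      ∈ zmultiples abar := by
    rw [zmult_mk_a hgen]; trivial
  obtain ⟨z, hz⟩ := mem_zmultiples_iff.mp this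
  obtain ⟨j, hj1, hj2⟩ := exists_nsmul_eq_zsmul abar hm z
  refine ⟨j, hj1, ?_⟩
  rw [hj2, hz]; abel

open Classical in
lemma sum_full (hgen : AddSubgroup.closure {a, b} = ⊤) :
    ∑ i ∈ Finset.range (addOrderOf (QuotientAddGroup.mk a : G ⧸ zmultiples (b - a))),
      (if Full a b τ f (QuotientAddGroup.mk τ + i • QuotientAddGroup.mk a) then (1:ℤ) else 0)
      = (R a b τ f : ℤ) := by
  classical
  set abar := (QuotientAddGroup.mk a : G ⧸ zmultiples (b - a)) with habar
  set m := addOrderOf abar with hm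
  haveI : Fintype (G ⧸ zmultiples (b - a)) := Fintype.ofFinite _
  have hR : R a b τ f = (Finset.univ.filter (Full a b τ f)).card := by
    rw [R, Nat.card_eq_fintype_card, Fintype.card_subtype]
  have hbij := Finset.sum_bij
    (s := Finset.range m) (t := (Finset.univ : Finset (G ⧸ zmultiples (b - a))))
    (f := fun i => (if Full a b τ f (QuotientAddGroup.mk τ + i • abar) then (1:ℤ) else 0))
    (g := fun q => (if Full a b τ f q then (1:ℤ) else 0))
    (fun i _ => QuotientAddGroup.mk τ + i • abar)
    (fun i _ => Finset.mem_univ _)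
    (fun i hi j hj hij => by
      rw [Finset.mem_range] at hi hj
      have : i • abar = j • abar := add_left_cancel hij
      exact nsmul_inj_of_lt_addOrder (hm ▸ hi) (hm ▸ hj) this)
    (fun q _ => by
      obtain ⟨x, rfl⟩ := QuotientAddGroup.mk_surjective q
      obtain ⟨j, hj1, hj2⟩ := exists_jrep (τ := τ) hgen x
      exact ⟨j, Finset.mem_range.mpr hj1, hj2.symm⟩)
    (fun i _ => rfl)
  rw [hbij, Finset.sum_boole, hR]


theorem exists_conj (a b : G) (hab : a ≠ b) (hgen : AddSubgroup.closure {a, b} = ⊤)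
    (τ : G) (f : {x : G // x ≠ τ} → G) (τ' : G) (f' : {x : G // x ≠ τ'} → G)
    (hf : IsQuasiPath a b τ f) (hf' : IsQuasiPath a b τ' f')
    (hcard : Nat.card (B b τ f) = Nat.card (B b τ' f')) :
    ∃ φ : G → G, Function.Bijective φ ∧ φ τ = τ' ∧
      ∀ (x : G) (h : x ≠ τ) (h' : φ x ≠ τ'), φ (f ⟨x, h⟩) = f' ⟨φ x, h'⟩ := by
  classical
  have hkpos : 0 < addOrderOf (b - a) := d_pos hab
  -- L and R agree
  have hLk : L a b τ f ≤ addOrderOf (b - a) - 1 := L_le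
  have hLk' : L a b τ' f' ≤ addOrderOf (b - a) - 1 := L_le
  have hcards : addOrderOf (b - a) * R a b τ f + L a b τ f
      = addOrderOf (b - a) * R a b τ' f' + L a b τ' f' := by
    rw [← card_B hf hab, ← card_B hf' hab, hcard]
  have hLL : L a b τ f = L a b τ' f' := by
    have h1 : (addOrderOf (b - a) * R a b τ f + L a b τ f) % addOrderOf (b - a) = L a b τ f := by
      rw [Nat.mul_add_mod]; exact Nat.mod_eq_of_lt (by omega)
    have h2 : (addOrderOf (b - a) * R a b τ' f' + L a b τ' f') % addOrderOf (b - a)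
        = L a b τ' f' := by
      rw [Nat.mul_add_mod]; exact Nat.mod_eq_of_lt (by omega)
    rw [← h1, ← h2, hcards]
  have hRR : R a b τ f = R a b τ' f' := by
    have h3 : addOrderOf (b - a) * R a b τ f = addOrderOf (b - a) * R a b τ' f' := by omega
    exact Nat.eq_of_mul_eq_mul_left hkpos h3
  have hmpos : 0 < addOrderOf (QuotientAddGroup.mk a : G ⧸ zmultiples (b - a)) :=
    addOrderOf_pos _
  -- minimal representation function on the quotient
  have hexq : ∀ q : G ⧸ zmultiples (b - a),
      ∃ j : ℕ, q = QuotientAddGroup.mk τ + j • QuotientAddGroup.mk a := by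
    intro q
    obtain ⟨x, rfl⟩ := QuotientAddGroup.mk_surjective q
    obtain ⟨j, _, hj⟩ := exists_jrep (τ := τ) hgen x
    exact ⟨j, hj⟩
  set jf : (G ⧸ zmultiples (b - a)) → ℕ := fun q => Nat.find (hexq q) with hjf
  have hjf_spec : ∀ q, q = QuotientAddGroup.mk τ + (jf q) • QuotientAddGroup.mk a :=
    fun q => Nat.find_spec (hexq q)
  have hjf_min : ∀ q (j' : ℕ), q = QuotientAddGroup.mk τ + j' • QuotientAddGroup.mk a
      → jf q ≤ j' := fun q j' h => Nat.find_min' (hexq q) h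
  have hjf_lt : ∀ q, jf q < addOrderOf (QuotientAddGroup.mk a : G ⧸ zmultiples (b - a)) := by
    intro q
    obtain ⟨x, rfl⟩ := QuotientAddGroup.mk_surjective q
    obtain ⟨j, hjm, hj⟩ := exists_jrep (τ := τ) hgen x
    exact lt_of_le_of_lt (hjf_min _ j hj) hjm
  have hjf_tau : jf (QuotientAddGroup.mk τ) = 0 :=
    Nat.le_zero.mp (hjf_min _ 0 (by simp))
  -- the defect function and its partial sums
  set c : ℕ → ℤ := fun i =>
    (if Full a b τ' f' (QuotientAddGroup.mk τ' + i • QuotientAddGroup.mk a) then (1:ℤ) else 0)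
    - (if Full a b τ f (QuotientAddGroup.mk τ + i • QuotientAddGroup.mk a) then (1:ℤ) else 0)
    with hc
  set S : ℕ → ℤ := fun j => ∑ i ∈ Finset.range j, c i with hS
  have hSm : S (addOrderOf (QuotientAddGroup.mk a : G ⧸ zmultiples (b - a))) = 0 := by
    rw [hS]
    simp only [hc]
    rw [Finset.sum_sub_distrib, sum_full hgen, sum_full hgen, hRR]
    ring
  -- the step relation for S ∘ jf
  have hSstep : ∀ q : G ⧸ zmultiples (b - a),
      S (jf (q + QuotientAddGroup.mk a)) = S (jf q) + c (jf q) := by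
    intro q
    by_cases hq : q + QuotientAddGroup.mk a = QuotientAddGroup.mk τ
    · -- wrap-around
      have h0 : jf (q + QuotientAddGroup.mk a) = 0 := by rw [hq]; exact hjf_tau
      have hsum : (jf q + 1) • (QuotientAddGroup.mk a : G ⧸ zmultiples (b - a)) = 0 := by
        have h1 : (QuotientAddGroup.mk τ : G ⧸ zmultiples (b - a)) + (0:ℕ) • QuotientAddGroup.mk a
            = QuotientAddGroup.mk τ + (jf q + 1) • QuotientAddGroup.mk a := by
          rw [zero_nsmul, add_zero, succ_nsmul, ← add_assoc, ← hjf_spec q, hq]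
        have h2 := add_left_cancel h1
        rw [zero_nsmul] at h2
        exact h2.symm
      have hdvd := addOrderOf_dvd_of_nsmul_eq_zero hsum
      have hlt := hjf_lt q
      have hjm : jf q + 1 = addOrderOf (QuotientAddGroup.mk a : G ⧸ zmultiples (b - a)) := by
        have := Nat.le_of_dvd (by omega) hdvd
        omega
      rw [h0]
      have h5 : S (jf q) + c (jf q) = S (jf q + 1) := (Finset.sum_range_succ c (jf q)).symm
      rw [h5, hjm, hSm]
      show (0:ℤ) = 0
      rfl
    · -- ordinary step
      have hup : jf (q + QuotientAddGroup.mk a) = jf q + 1 := by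
        have hle : jf (q + QuotientAddGroup.mk a) ≤ jf q + 1 := by
          apply hjf_min
          rw [succ_nsmul, ← add_assoc, ← hjf_spec q]
        have hge : jf q + 1 ≤ jf (q + QuotientAddGroup.mk a) := by
          rcases Nat.eq_zero_or_pos (jf (q + QuotientAddGroup.mk a)) with h0 | hpos
          · exfalso
            have hzz := hjf_spec (q + QuotientAddGroup.mk a)
            rw [h0, zero_nsmul, add_zero] at hzz
            exact hq hzz
          · obtain ⟨j'', hj''⟩ : ∃ j'', jf (q + QuotientAddGroup.mk a) = j'' + 1 :=
              ⟨jf (q + QuotientAddGroup.mk a) - 1, by omega⟩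
            have hspec := hjf_spec (q + QuotientAddGroup.mk a)
            rw [hj''] at hspec
            have hq' : q = QuotientAddGroup.mk τ + j'' • QuotientAddGroup.mk a := by
              have h6 : q + QuotientAddGroup.mk a
                  = QuotientAddGroup.mk τ + j'' • QuotientAddGroup.mk a + QuotientAddGroup.mk a := by
                rw [hspec, succ_nsmul, ← add_assoc]
              exact add_right_cancel h6
            have := hjf_min q j'' hq'
            omega
        omega
      rw [hup]
      exact Finset.sum_range_succ c (jf q)
  -- the conjugating map
  set φ : G → G := fun x => x + (τ' - τ) + S (jf (QuotientAddGroup.mk x)) • (b - a) with hφ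
  have hφval : ∀ x : G, φ x = x + (τ' - τ) + S (jf (QuotientAddGroup.mk x)) • (b - a) :=
    fun x => rfl
  have hφτ : φ τ = τ' := by
    rw [hφval, hjf_tau]
    have : S 0 = 0 := rfl
    rw [this, zero_smul, add_zero]
    abel
  have hmkφ : ∀ x : G, (QuotientAddGroup.mk (φ x) : G ⧸ zmultiples (b - a))
      = QuotientAddGroup.mk x + QuotientAddGroup.mk τ' - QuotientAddGroup.mk τ := by
    intro x
    have hd0 : (QuotientAddGroup.mk (b - a) : G ⧸ zmultiples (b - a)) = 0 :=
      (QuotientAddGroup.eq_zero_iff (b - a)).mpr (mem_zmultiples (b - a))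
    rw [hφval, QuotientAddGroup.mk_add, QuotientAddGroup.mk_add, QuotientAddGroup.mk_zsmul,
      hd0, smul_zero, add_zero, QuotientAddGroup.mk_sub]
    abel
  have hφinj : Function.Injective φ := by
    intro x y hxy
    have hmk : (QuotientAddGroup.mk x : G ⧸ zmultiples (b - a)) = QuotientAddGroup.mk y := by
      have h6 := congrArg (QuotientAddGroup.mk (s := zmultiples (b - a))) hxy
      rw [hmkφ, hmkφ] at h6
      exact add_right_cancel (sub_left_inj.mp h6)
    rw [hφval, hφval, hmk] at hxy
    exact add_right_cancel (add_right_cancel hxy)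
  refine ⟨φ, (Finite.injective_iff_bijective).mp hφinj, hφτ, ?_⟩
  -- the conjugacy identity
  intro x h h'
  have hfx : f ⟨x, h⟩ = x + a + (if x ∈ B b τ f then (1:ℤ) else 0) • (b - a) := by
    by_cases hx : x ∈ B b τ f
    · rw [if_pos hx, f_eq_of_mem_B hx h, one_smul]; abel
    · rw [if_neg hx, f_eq_of_not_mem_B hf hx h, zero_smul, add_zero]
  have hfx' : f' ⟨φ x, h'⟩ = φ x + a + (if φ x ∈ B b τ' f' then (1:ℤ) else 0) • (b - a) := by
    by_cases hx : φ x ∈ B b τ' f'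
    · rw [if_pos hx, f_eq_of_mem_B hx h', one_smul]; abel
    · rw [if_neg hx, f_eq_of_not_mem_B hf' hx h', zero_smul, add_zero]
  have hmkfx : (QuotientAddGroup.mk (f ⟨x, h⟩) : G ⧸ zmultiples (b - a))
      = QuotientAddGroup.mk x + QuotientAddGroup.mk a := by
    by_cases hx : x ∈ B b τ f
    · rw [f_eq_of_mem_B hx h, QuotientAddGroup.mk_add, mk_b_eq_mk_a (a := a) (b := b)]
    · rw [f_eq_of_not_mem_B hf hx h, QuotientAddGroup.mk_add]
  -- the key indicator identity
  have hkey : (if φ x ∈ B b τ' f' then (1:ℤ) else 0)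
      = (if x ∈ B b τ f then (1:ℤ) else 0) + c (jf (QuotientAddGroup.mk x)) := by
    by_cases hxτ : (QuotientAddGroup.mk x : G ⧸ zmultiples (b - a)) = QuotientAddGroup.mk τ
    · -- τ's coset : the two segments match up
      have hj0 : jf (QuotientAddGroup.mk x) = 0 := by rw [hxτ]; exact hjf_tau
      have hφx : φ x = x + (τ' - τ) := by
        rw [hφval, hj0]
        have : S 0 = 0 := rfl
        rw [this, zero_smul, add_zero]
      have hc0 : c 0 = 0 := by
        rw [hc]
        simp only [zero_nsmul, add_zero]
        rw [if_neg (not_full_tau (a := a)), if_neg (not_full_tau (a := a))]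
        ring
      rw [hj0, hc0, add_zero, hφx]
      have hiff : x + (τ' - τ) ∈ B b τ' f' ↔ x ∈ B b τ f := by
        constructor
        · intro hmem
          have hmkxt : (QuotientAddGroup.mk (x + (τ' - τ)) : G ⧸ zmultiples (b - a))
              = QuotientAddGroup.mk τ' := by
            rw [QuotientAddGroup.mk_add, hxτ, QuotientAddGroup.mk_sub]
            abel
          obtain ⟨i, h1, h2, h3⟩ := mem_seg hf' hab hmem hmkxt
          have hxe : x = τ - i • (b - a) := by
            have h4 : x + (τ' - τ) - (τ' - τ) = τ' - i • (b - a) - (τ' - τ) := by rw [h3]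
            have h5 : x = τ' - i • (b - a) - (τ' - τ) := by
              rw [← h4]; abel
            rw [h5]; abel
          rw [hxe]
          exact seg_mem h1 (by omega)
        · intro hmem
          obtain ⟨i, h1, h2, h3⟩ := mem_seg hf hab hmem hxτ
          have hxe : x + (τ' - τ) = τ' - i • (b - a) := by rw [h3]; abel
          rw [hxe]
          exact seg_mem h1 (by omega)
      by_cases hmem : x ∈ B b τ f
      · rw [if_pos hmem, if_pos (hiff.mpr hmem)]
      · rw [if_neg hmem, if_neg (fun hcon => hmem (hiff.mp hcon))]
    · -- a full-or-empty coset
      have hmkx : QuotientAddGroup.mk τ + jf (QuotientAddGroup.mk x) • QuotientAddGroup.mk a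
          = (QuotientAddGroup.mk x : G ⧸ zmultiples (b - a)) :=
        (hjf_spec _).symm
      have hmkφx : QuotientAddGroup.mk τ' + jf (QuotientAddGroup.mk x) • QuotientAddGroup.mk a
          = (QuotientAddGroup.mk (φ x) : G ⧸ zmultiples (b - a)) := by
        have h9 : (QuotientAddGroup.mk (φ x) : G ⧸ zmultiples (b - a))
            = (QuotientAddGroup.mk τ + jf (QuotientAddGroup.mk x) • QuotientAddGroup.mk a)
              + QuotientAddGroup.mk τ' - QuotientAddGroup.mk τ := by
          rw [hmkφ, ← hjf_spec]
        rw [h9]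
        generalize (jf (QuotientAddGroup.mk x)
          • (QuotientAddGroup.mk a : G ⧸ zmultiples (b - a))) = w
        abel
      have hφxτ' : (QuotientAddGroup.mk (φ x) : G ⧸ zmultiples (b - a))
          ≠ QuotientAddGroup.mk τ' := by
        rw [← hmkφx]
        intro hcon
        have h2 : jf (QuotientAddGroup.mk x)
            • (QuotientAddGroup.mk a : G ⧸ zmultiples (b - a)) = 0 :=
          add_eq_left.mp hcon
        apply hxτ
        exact (hjf_spec _).trans (by rw [h2, add_zero])
      have hiff1 : Full a b τ f
          (QuotientAddGroup.mk τ + jf (QuotientAddGroup.mk x) • QuotientAddGroup.mk a)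
          ↔ x ∈ B b τ f := by
        rw [hmkx]
        constructor
        · intro hfull; exact hfull x rfl
        · intro hmem; intro y hy; exact full_coset hf hab hmem hxτ hy
      have hiff2 : Full a b τ' f'
          (QuotientAddGroup.mk τ' + jf (QuotientAddGroup.mk x) • QuotientAddGroup.mk a)
          ↔ φ x ∈ B b τ' f' := by
        rw [hmkφx]
        constructor
        · intro hfull; exact hfull (φ x) rfl
        · intro hmem; intro y hy; exact full_coset hf' hab hmem hφxτ' hy
      rw [hc]
      simp only [hiff1, hiff2]
      ring
  -- now the computation
  have hlhs : φ (f ⟨x, h⟩)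
      = f ⟨x, h⟩ + (τ' - τ) + S (jf (QuotientAddGroup.mk x + QuotientAddGroup.mk a)) • (b - a) := by
    rw [hφval, hmkfx]
  rw [hlhs, hSstep, hfx, hfx', hkey, hφval, add_zsmul, add_zsmul]
  module


end QPaux

/-- If two spanning quasi-paths in `Cay(G; a, b)` have the same `δ_b`, and one is a
hamiltonian path, then so is the other. -/
theorem quasi_path_ham_of_same_delta {G : Type*} [AddCommGroup G] [Fintype G] (a b : G)
    (hab : a ≠ b) (hgen : AddSubgroup.closure {a, b} = ⊤)
    (τ : G) (f : {x : G // x ≠ τ} → G) (τ' : G) (f' : {x : G // x ≠ τ'} → G)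
    (hf : IsQuasiPath a b τ f) (hf' : IsQuasiPath a b τ' f')
    (hd : qDelta τ f b = qDelta τ' f' b)
    (hham : QuasiIsHamPath τ f) :
    QuasiIsHamPath τ' f' := by
  classical
  have hcard : Nat.card (QPaux.B b τ f) = Nat.card (QPaux.B b τ' f') := by
    rw [QPaux.card_B_eq_qDelta, QPaux.card_B_eq_qDelta]
    exact hd
  obtain ⟨φ, hbij, hφτ, hconj⟩ := QPaux.exists_conj a b hab hgen τ f τ' f' hf hf' hcard
  obtain ⟨v, hvbij, hvlast, hvstep⟩ := hham
  refine ⟨φ ∘ v, hbij.comp hvbij, ?_, ?_⟩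
  · intro j hj
    simp only [Function.comp_apply]
    rw [hvlast j hj, hφτ]
  · intro i hi
    obtain ⟨hne, hstep⟩ := hvstep i hi
    have hne' : φ (v ⟨i, Nat.lt_of_succ_lt hi⟩) ≠ τ' := by
      intro hcon
      apply hne
      have hcon2 : φ (v ⟨i, Nat.lt_of_succ_lt hi⟩) = φ τ := by rw [hcon, hφτ]
      exact hbij.1 hcon2
    refine ⟨hne', ?_⟩
    simp only [Function.comp_apply]
    rw [← hconj _ hne hne', hstep]
end

section
/- Let {a, b} be a 2-element generating set of a finite abelian group G. For every integer k with 0 ≤ k < |G|, there is a spanning quasi-path P in Cay(G; a, b) such that δ_b(P) = k. -/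
/-- For every `0 ≤ k < |G|` there is a spanning quasi-path `P` in `Cay(G; a, b)`
with `δ_b(P) = k`. -/
theorem exists_quasi_path_with_delta {G : Type*} [AddCommGroup G] [Fintype G] (a b : G)
    (hab : a ≠ b) (hgen : AddSubgroup.closure {a, b} = ⊤)
    (k : ℕ) (hk : k < Fintype.card G) :
    ∃ (τ : G) (f : {x : G // x ≠ τ} → G),
      IsQuasiPath a b τ f ∧ qDelta τ f b = k := by
  classical
  set d := a - b with hd
  have hd0 : d ≠ 0 := sub_ne_zero.mpr hab
  set m := addOrderOf d with hmdef
  have hm1 : 0 < m := addOrderOf_pos d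
  have hmne1 : m ≠ 1 := fun h => hd0 (AddMonoid.addOrderOf_eq_one_iff.mp h)
  have hm2 : 2 ≤ m := by omega
  haveI : NeZero m := ⟨by omega⟩
  haveI : Fact (1 < m) := ⟨by omega⟩
  set H : AddSubgroup G := AddSubgroup.zmultiples d with hH
  haveI : Fintype (G ⧸ H) := Fintype.ofFinite _
  -- rigidity of multiples of d modulo m
  have key : ∀ z z' : ℤ, z • d = z' • d ↔ ((z : ZMod m) = (z' : ZMod m)) := by
    intro z z'
    rw [← sub_eq_zero, ← sub_smul, ← addOrderOf_dvd_iff_zsmul_eq_zero,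
      ZMod.intCast_eq_intCast_iff, Int.modEq_iff_dvd, ← hmdef]
    exact dvd_sub_comm
  -- the phase function
  have hmem : ∀ x : G, ∃ z : ℤ, z • d = x - ((x : G ⧸ H)).out := by
    intro x
    rw [← AddSubgroup.mem_zmultiples_iff, ← hH, ← QuotientAddGroup.eq_iff_sub_mem,
      QuotientAddGroup.out_eq']
  set Z : G → ℤ := fun x => (hmem x).choose with hZdef
  have hZ : ∀ x : G, (Z x) • d = x - ((x : G ⧸ H)).out := fun x => (hmem x).choose_spec
  set φ : G → ZMod m := fun x => ((Z x : ℤ) : ZMod m) with hφdef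
  -- behavior under translation by d
  have hqd : ∀ x : G, ((x + d : G) : G ⧸ H) = (x : G ⧸ H) := by
    intro x
    rw [QuotientAddGroup.eq_iff_sub_mem, add_sub_cancel_left]
    exact AddSubgroup.mem_zmultiples d
  have hφd : ∀ x : G, φ (x + d) = φ x + 1 := by
    intro x
    have h1 : (Z (x + d)) • d = (Z x + 1) • d := by
      rw [hZ, hqd, add_smul, hZ, one_smul]
      abel
    have := (key _ _).mp h1
    simpa [φ] using this
  -- injectivity of the combined map
  have hEinj : ∀ x y : G, (x : G ⧸ H) = (y : G ⧸ H) → φ x = φ y → x = y := by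
    intro x y h1 h2
    have h3 : (Z x) • d = (Z y) • d := (key _ _).mpr h2
    have hout : ((x : G ⧸ H)).out = ((y : G ⧸ H)).out := by rw [h1]
    have h4 : x - ((x : G ⧸ H)).out = y - ((y : G ⧸ H)).out := by rw [← hZ, ← hZ, h3]
    rw [hout] at h4
    have h5 := congrArg (· + ((y : G ⧸ H)).out) h4
    simpa using h5
  -- cardinality
  have hcard : Fintype.card G = Fintype.card (G ⧸ H) * m := by
    have h1 := AddSubgroup.card_eq_card_quotient_mul_card_addSubgroup H
    have h2 : Fintype.card H = m := by
      rw [← Nat.card_eq_fintype_card, hH, Nat.card_zmultiples, hmdef]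
    simpa [Nat.card_eq_fintype_card, h2] using h1
  -- parameters
  set t := k / m with htdef
  set i := k % m with hidef
  have hi : i < m := Nat.mod_lt _ hm1
  have ht : t < Fintype.card (G ⧸ H) := by
    rw [htdef, Nat.div_lt_iff_lt_mul hm1]
    rw [hcard] at hk
    exact hk
  -- the terminal vertex
  set q₀ : G ⧸ H := ((0 : G) : G ⧸ H) with hq₀def
  set τ : G := q₀.out with hτdef
  have hτq : ((τ : G) : G ⧸ H) = q₀ := QuotientAddGroup.out_eq' q₀
  have hφτ : φ τ = 0 := by
    have h1 : (Z τ) • d = ((0 : ℤ)) • d := by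
      rw [hZ, hτq, hτdef, zero_smul, sub_self]
    have := (key _ _).mp h1
    simpa [φ] using this
  have hτchar : ∀ x : G, (x : G ⧸ H) = q₀ → φ x = 0 → x = τ := by
    intro x h1 h2
    exact hEinj x τ (by rw [h1, hτq]) (by rw [h2, hφτ])
  -- the set of all-b cosets
  obtain ⟨S, hSsub, hScard⟩ := Finset.exists_subset_card_eq
    (s := (Finset.univ : Finset (G ⧸ H)).erase q₀) (n := t)
    (by rw [Finset.card_erase_of_mem (Finset.mem_univ _), Finset.card_univ]; omega)
  have hq₀S : q₀ ∉ S := fun h => (Finset.mem_erase.mp (hSsub h)).1 rfl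
  -- the labeling
  set C : (G ⧸ H) × ZMod m → Prop :=
    fun p => if p.1 = q₀ then 1 ≤ p.2.val ∧ p.2.val ≤ i else p.1 ∈ S with hCdef
  set c : G → Prop := fun x => C ((x : G ⧸ H), φ x) with hcdef
  have hcτ : ¬ c τ := by
    simp only [hcdef, hCdef]
    rw [if_pos hτq, hφτ, ZMod.val_zero]
    omega
  -- no bad pair
  have hbad : ∀ x : G, x ≠ τ → x + d ≠ τ → ¬ c x → c (x + d) → False := by
    intro x hx hxd hcx hcxd
    by_cases hq : (x : G ⧸ H) = q₀
    · simp only [hcdef, hCdef] at hcx hcxd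
      rw [if_pos hq] at hcx
      rw [if_pos (show ((x + d : G) : G ⧸ H) = q₀ by rw [hqd x]; exact hq)] at hcxd
      rw [hφd x] at hcxd
      have h1 : φ x ≠ 0 := fun h => hx (hτchar x hq h)
      have hv1 : 1 ≤ (φ x).val := by
        rcases Nat.eq_zero_or_pos (φ x).val with h | h
        · exact absurd ((ZMod.val_eq_zero _).mp h) h1
        · omega
      have hvlt : (φ x).val < m := ZMod.val_lt _
      have hva : (φ x + 1).val = ((φ x).val + 1) % m := by
        rw [ZMod.val_add, ZMod.val_one]
      rcases Nat.lt_or_ge (φ x).val (m - 1) with h | h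
      · have hlt : (φ x).val + 1 < m := by omega
        have hval : (φ x + 1).val = (φ x).val + 1 := by
          rw [hva, Nat.mod_eq_of_lt hlt]
        rw [hval] at hcxd
        exact hcx ⟨hv1, by omega⟩
      · have hvm : (φ x).val = m - 1 := by omega
        have h1m : 1 ≤ m := by omega
        have hval : (φ x + 1).val = 0 := by
          rw [hva, hvm, Nat.sub_add_cancel h1m, Nat.mod_self]
        rw [hval] at hcxd
        omega
    · simp only [hcdef, hCdef] at hcx hcxd
      rw [if_neg hq] at hcx
      rw [if_neg (show ¬((x + d : G) : G ⧸ H) = q₀ by rw [hqd x]; exact hq)] at hcxd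
      rw [hqd x] at hcxd
      exact hcx hcxd
  -- the quasi-path
  refine ⟨τ, fun x => (x : G) + (if c x then b else a), ⟨?_, ?_⟩, ?_⟩
  · -- injectivity
    intro x y hxy
    simp only at hxy
    by_cases hcx : c x <;> by_cases hcy : c y
    · rw [if_pos hcx, if_pos hcy, add_left_inj] at hxy; exact Subtype.ext hxy
    · rw [if_pos hcx, if_neg hcy] at hxy
      have hyx : (y : G) + d = (x : G) := by
        rw [hd, ← add_sub_assoc, ← hxy, add_sub_cancel_right]
      exact (hbad y y.2 (by rw [hyx]; exact x.2) hcy (by rw [hyx]; exact hcx)).elim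
    · rw [if_neg hcx, if_pos hcy] at hxy
      have hyx : (x : G) + d = (y : G) := by
        rw [hd, ← add_sub_assoc, hxy, add_sub_cancel_right]
      exact (hbad x x.2 (by rw [hyx]; exact y.2) hcx (by rw [hyx]; exact hcy)).elim
    · rw [if_neg hcx, if_neg hcy, add_left_inj] at hxy; exact Subtype.ext hxy
  · -- steps
    intro x
    show (x : G) + (if c (x : G) then b else a) - (x : G) ∈ ({a, b} : Set G)
    rw [add_sub_cancel_left]
    by_cases hcx : c (x : G)
    · rw [if_pos hcx]; exact Set.mem_insert_of_mem _ rfl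
    · rw [if_neg hcx]; exact Set.mem_insert _ _
  · -- counting
    have hiff : ∀ x : {x : G // x ≠ τ},
        ((x : G) + (if c (x : G) then b else a) = (x : G) + b) ↔ c (x : G) := by
      intro x
      rw [add_right_inj]
      by_cases hcx : c (x : G) <;> simp [hcx, hab]
    rw [qDelta]
    have e1 : {x : {x : G // x ≠ τ} // (x : G) + (if c (x : G) then b else a) = (x : G) + b} ≃
        {x : {x : G // x ≠ τ} // c (x : G)} := Equiv.subtypeEquivRight hiff
    have e2 : {x : {x : G // x ≠ τ} // c (x : G)} ≃ {x : G // x ≠ τ ∧ c x} :=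
      Equiv.subtypeSubtypeEquivSubtypeInter _ _
    have e3 : {x : G // x ≠ τ ∧ c x} ≃ {x : G // c x} :=
      Equiv.subtypeEquivRight (fun x => ⟨fun h => h.2,
        fun h => ⟨fun he => hcτ (he ▸ h), h⟩⟩)
    -- transfer to the product via the bijection
    have hEbij : Function.Bijective (fun x : G => ((x : G ⧸ H), φ x)) := by
      rw [Fintype.bijective_iff_injective_and_card]
      constructor
      · intro x y hxy
        exact hEinj x y (congrArg Prod.fst hxy) (congrArg Prod.snd hxy)
      · rw [Fintype.card_prod, ZMod.card, hcard]
    have e4 : {x : G // c x} ≃ {p : (G ⧸ H) × ZMod m // C p} :=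
      Equiv.subtypeEquiv (Equiv.ofBijective _ hEbij) (fun x => Iff.rfl)
    rw [Nat.card_congr (((e1.trans e2).trans e3).trans e4)]
    -- count on the product
    rw [Nat.card_eq_fintype_card, Fintype.card_subtype]
    set J : Finset (ZMod m) :=
      Finset.univ.filter (fun j : ZMod m => 1 ≤ j.val ∧ j.val ≤ i) with hJdef
    have hJ : J = Finset.image (Nat.cast : ℕ → ZMod m) (Finset.Icc 1 i) := by
      rw [hJdef]
      ext j
      simp only [Finset.mem_filter, Finset.mem_univ, true_and, Finset.mem_image,
        Finset.mem_Icc]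
      constructor
      · rintro ⟨h1, h2⟩
        exact ⟨j.val, ⟨h1, h2⟩, ZMod.natCast_rightInverse j⟩
      · rintro ⟨v, ⟨hv1, hv2⟩, rfl⟩
        rw [ZMod.val_cast_of_lt (by omega)]
        exact ⟨hv1, hv2⟩
    have hJcard : J.card = i := by
      rw [hJ, Finset.card_image_of_injOn, Nat.card_Icc]
      · omega
      · intro v hv w hw hvw
        simp only [Finset.coe_Icc, Set.mem_Icc] at hv hw
        have : ((v : ZMod m)).val = ((w : ZMod m)).val := by rw [hvw]
        rwa [ZMod.val_cast_of_lt (by omega), ZMod.val_cast_of_lt (by omega)] at this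
    have hsplit : (Finset.univ.filter C) =
        S ×ˢ (Finset.univ : Finset (ZMod m)) ∪
        ({q₀} : Finset (G ⧸ H)) ×ˢ J := by
      rw [hJdef]
      ext ⟨p1, p2⟩
      simp only [Finset.mem_filter, Finset.mem_univ, true_and, Finset.mem_union,
        Finset.mem_product, Finset.mem_singleton, hCdef]
      by_cases h : p1 = q₀ <;> simp [h, hq₀S]
    rw [hsplit, Finset.card_union_of_disjoint, Finset.card_product, Finset.card_product,
      hScard, hJcard, Finset.card_univ, ZMod.card, Finset.card_singleton, one_mul]
    · rw [htdef, hidef, mul_comm]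
      exact Nat.div_add_mod k m
    · rw [Finset.disjoint_left]
      rintro ⟨p1, p2⟩ h1 h2
      simp only [Finset.mem_product, Finset.mem_singleton] at h1 h2
      exact hq₀S (h2.1 ▸ h1.1)
end

section
/- Let {a, b} be a 2-element generating set of a finite abelian group G, let m be the order of a, and let n = |G|/m. If m ≥ 2, then there exists n′ ∈ {n−1, n} such that for each i in the set {n′, n′+2, n′+4, …, n′ + 2⌊(n−1)/2⌋}, there is a hamiltonian path P_i in Cay(G; a, b) with δ_b(P_i) = i. -/
/-- `v : Fin N → G` is a hamiltonian path of the Cayley digraph `Cay(G; a, b)`. -/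
def IsHamPath {G : Type*} [AddCommGroup G] (a b : G) (N : ℕ) (v : Fin N → G) : Prop :=
  Function.Bijective v ∧
    ∀ (i : ℕ) (h : i + 1 < N),
      v ⟨i + 1, h⟩ - v ⟨i, Nat.lt_of_succ_lt h⟩ ∈ ({a, b} : Set G)

/-- The number of indices `i` with `v (i+1) - v i = s`. -/
noncomputable def delta {G : Type*} [AddCommGroup G] (N : ℕ) (v : Fin N → G) (s : G) : ℕ :=
  Nat.card {i : ℕ // ∃ h : i + 1 < N, v ⟨i + 1, h⟩ - v ⟨i, Nat.lt_of_succ_lt h⟩ = s}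

/-- Run lengths for the string-of-hamiltonian-paths construction. -/
def sphpL (m k D n t : ℕ) : ℕ :=
  if t < D then (if t % 2 = 0 then k else m - k)
  else if t < n then m
  else if (t - n) % 2 = 0 then m - k else k

/-- Prefix sums of the run lengths. -/
def sphpP (m k D n t : ℕ) : ℕ := ∑ s ∈ Finset.range t, sphpL m k D n s

/-- The run index of position `i`. -/
def sphpG (m k D n i : ℕ) : ℕ :=
  Nat.findGreatest (fun t => sphpP m k D n t ≤ i) (n + D)

section lemmas

variable {m k D n : ℕ} (hm : 2 ≤ m) (hk1 : 1 ≤ k) (hkm : k < m) (hDn : D ≤ n)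

include hk1 hkm in
lemma sphpL_pos (t : ℕ) : 0 < sphpL m k D n t := by
  unfold sphpL; split_ifs <;> omega

include hkm in
lemma sphpL_le (t : ℕ) : sphpL m k D n t ≤ m := by
  unfold sphpL; split_ifs <;> omega

lemma sphpP_succ (t : ℕ) :
    sphpP m k D n (t + 1) = sphpP m k D n t + sphpL m k D n t :=
  Finset.sum_range_succ _ _

@[simp] lemma sphpP_zero : sphpP m k D n 0 = 0 := rfl

include hk1 hkm in
lemma sphpP_lt {t t' : ℕ} (h : t < t') : sphpP m k D n t < sphpP m k D n t' := by
  induction t' with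
  | zero => omega
  | succ u ih =>
    rw [sphpP_succ]
    have := sphpL_pos hk1 hkm (m := m) (D := D) (n := n) u
    rcases Nat.lt_succ_iff_lt_or_eq.mp h with h' | rfl
    · exact lt_of_lt_of_le (ih h') (by omega)
    · omega

include hk1 hkm in
lemma sphpP_le {t t' : ℕ} (h : t ≤ t') : sphpP m k D n t ≤ sphpP m k D n t' := by
  rcases eq_or_lt_of_le h with rfl | h'
  · exact le_rfl
  · exact le_of_lt (sphpP_lt hk1 hkm h')

include hkm in
lemma sphpP_phase1 : ∀ t ≤ D, sphpP m k D n t = t / 2 * m + t % 2 * k := by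
  intro t ht
  induction t with
  | zero => simp
  | succ u ih =>
    rw [sphpP_succ, ih (by omega)]
    have hu : u < D := by omega
    rcases Nat.even_or_odd u with ⟨c, rfl⟩ | ⟨c, rfl⟩
    · have hLv : sphpL m k D n (c + c) = k := by
        unfold sphpL; rw [if_pos hu, if_pos (by omega)]
      have h1 : (c + c) % 2 = 0 := by omega
      have h2 : (c + c) / 2 = c := by omega
      have h3 : (c + c + 1) / 2 = c := by omega
      have h4 : (c + c + 1) % 2 = 1 := by omega
      simp only [hLv, h1, h2, h3, h4]
      ring
    · have hLv : sphpL m k D n (2 * c + 1) = m - k := by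
        unfold sphpL; rw [if_pos hu, if_neg (by omega)]
      have h1 : (2 * c + 1) % 2 = 1 := by omega
      have h2 : (2 * c + 1) / 2 = c := by omega
      have h3 : (2 * c + 1 + 1) / 2 = c + 1 := by omega
      have h4 : (2 * c + 1 + 1) % 2 = 0 := by omega
      simp only [hLv, h1, h2, h3, h4]
      have h5 : (c + 1) * m = c * m + m := by ring
      omega

include hDn in
lemma sphpP_mid : ∀ t, D ≤ t → t ≤ n → sphpP m k D n t = sphpP m k D n D + (t - D) * m := by
  intro t hDt htn
  induction t with
  | zero =>
    have hD0 : D = 0 := by omega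
    subst hD0; simp
  | succ u ih =>
    rcases Nat.eq_or_lt_of_le hDt with h | h
    · simp [← h]
    · have hDu : D ≤ u := by omega
      rw [sphpP_succ, ih hDu (by omega)]
      have : sphpL m k D n u = m := by
        unfold sphpL; rw [if_neg (by omega), if_pos (by omega)]
      rw [this]
      have : u + 1 - D = (u - D) + 1 := by omega
      rw [this]; ring

include hkm hDn in
lemma sphpL_shift {s : ℕ} (hs : s < D) : sphpL m k D n (n + s) = m - sphpL m k D n s := by
  unfold sphpL
  rw [if_neg (by omega), if_neg (by omega), if_pos hs]
  have : n + s - n = s := by omega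
  rw [this]
  split_ifs <;> omega

include hkm hDn in
lemma sphpP_shift : ∀ s ≤ D, (sphpP m k D n (n + s) : ℤ) =
    (sphpP m k D n n : ℤ) + s * m - sphpP m k D n s := by
  intro s hs
  induction s with
  | zero => simp
  | succ u ih =>
    have h1 : n + (u + 1) = (n + u) + 1 := by omega
    rw [h1, sphpP_succ, sphpP_succ, sphpL_shift hkm hDn (by omega)]
    push_cast [Nat.cast_sub (sphpL_le hkm u)]
    rw [ih (by omega)]
    push_cast [Nat.cast_sub (sphpL_le hkm u)]
    ring

include hk1 hkm hDn in
lemma sphpP_total : (sphpP m k D n (n + D) : ℤ) = n * m := by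
  rw [sphpP_shift hkm hDn D le_rfl, sphpP_mid (m := m) (k := k) hDn n hDn le_rfl]
  push_cast [Nat.cast_sub hDn]
  ring

include hk1 hkm in
lemma sphp_key2 {t : ℕ} (ht : t < D) :
    (2 * sphpP m k D n t + sphpL m k D n t : ℤ) = k + t * m := by
  have hP := sphpP_phase1 hkm (n := n) (D := D) t (by omega)
  have hL : sphpL m k D n t = if t % 2 = 0 then k else m - k := by
    unfold sphpL; rw [if_pos ht]
  rcases Nat.even_or_odd t with ⟨c, rfl⟩ | ⟨c, rfl⟩
  · have h1 : (c + c) % 2 = 0 := by omega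
    have h2 : (c + c) / 2 = c := by omega
    rw [hP, hL, h1, h2, if_pos rfl]
    push_cast
    ring
  · have h1 : (2 * c + 1) % 2 = 1 := by omega
    have h2 : (2 * c + 1) / 2 = c := by omega
    rw [hP, hL, h1, h2, if_neg (by omega)]
    push_cast [Nat.cast_sub (le_of_lt hkm)]
    ring

include hk1 hkm hDn in
lemma sphp_F3 {e : ℤ} (hkey : (m : ℤ) ∣ ((sphpP m k D n D : ℤ) - k - n + e)) {t : ℕ}
    (ht : t < D) :
    (m : ℤ) ∣ ((sphpP m k D n (n + t) : ℤ) - sphpP m k D n t - sphpL m k D n t - n + e) := by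
  have h1 := sphpP_shift hkm hDn t (by omega)
  have h2 := sphpP_mid (m := m) (k := k) hDn n hDn le_rfl
  have h3 := sphp_key2 hk1 hkm (n := n) ht
  have heq : (sphpP m k D n (n + t) : ℤ) - sphpP m k D n t - sphpL m k D n t - n + e =
      ((sphpP m k D n D : ℤ) - k - n + e) + ((n : ℤ) - D) * m := by
    rw [h1, h2]
    push_cast [Nat.cast_sub hDn]
    linarith [h3]
  rw [heq]
  exact dvd_add hkey ⟨(n : ℤ) - D, by ring⟩

-- gamma lemmas
include hk1 hkm in
lemma sphpG_le (i : ℕ) : sphpP m k D n (sphpG m k D n i) ≤ i := by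
  exact Nat.findGreatest_spec (P := fun t => sphpP m k D n t ≤ i) (m := 0) (Nat.zero_le _) (show sphpP m k D n 0 ≤ i by simp)

include hk1 hkm hDn in
lemma sphpG_lt {i : ℕ} (hi : i < n * m) : sphpG m k D n i < n + D := by
  have h1 : sphpG m k D n i ≤ n + D := Nat.findGreatest_le _
  rcases Nat.eq_or_lt_of_le h1 with h | h
  · exfalso
    have h2 := sphpG_le hk1 hkm (D := D) (n := n) i
    rw [h] at h2
    have h3 : (sphpP m k D n (n + D) : ℤ) = n * m := sphpP_total hk1 hkm hDn
    have : sphpP m k D n (n + D) = n * m := by exact_mod_cast h3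
    omega
  · exact h

include hk1 hkm hDn in
lemma sphpG_ub {i : ℕ} (hi : i < n * m) : i < sphpP m k D n (sphpG m k D n i + 1) := by
  have h1 : sphpG m k D n i < n + D := sphpG_lt hk1 hkm hDn hi
  have := Nat.findGreatest_is_greatest (P := fun t => sphpP m k D n t ≤ i)
    (n := n + D) (k := sphpG m k D n i + 1) (Nat.lt_succ_self _) (by omega)
  have h2 : ¬ sphpP m k D n (sphpG m k D n i + 1) ≤ i := this
  omega

include hk1 hkm in
lemma sphpG_eq {i t : ℕ} (ht : t < n + D) (h1 : sphpP m k D n t ≤ i)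
    (h2 : i < sphpP m k D n (t + 1)) : sphpG m k D n i = t := by
  rcases lt_trichotomy (sphpG m k D n i) t with h | h | h
  · exfalso
    exact Nat.findGreatest_is_greatest (P := fun t => sphpP m k D n t ≤ i)
      (n := n + D) h (by omega) h1
  · exact h
  · exfalso
    have h3 := sphpG_le hk1 hkm (D := D) (n := n) i
    have h4 : sphpP m k D n (t + 1) ≤ sphpP m k D n (sphpG m k D n i) :=
      sphpP_le hk1 hkm (by omega)
    omega

include hk1 hkm hDn in
lemma sphpG_step {i : ℕ} (hi : i + 1 < n * m) :
    sphpG m k D n (i + 1) = sphpG m k D n i ∨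
    sphpG m k D n (i + 1) = sphpG m k D n i + 1 := by
  have hi' : i < n * m := by omega
  have h1 := sphpG_le hk1 hkm (D := D) (n := n) i
  have h2 := sphpG_ub hk1 hkm hDn hi'
  have h3 := sphpG_lt hk1 hkm hDn hi'
  rcases Nat.lt_or_ge (i + 1) (sphpP m k D n (sphpG m k D n i + 1)) with h | h
  · left; exact sphpG_eq hk1 hkm h3 (by omega) h
  · right
    have h4 : i + 1 = sphpP m k D n (sphpG m k D n i + 1) := by omega
    have h5 : sphpG m k D n i + 1 < n + D := by
      rcases Nat.eq_or_lt_of_le (by omega : sphpG m k D n i + 1 ≤ n + D) with h' | h'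
      · exfalso
        have h6 : (sphpP m k D n (n + D) : ℤ) = n * m := sphpP_total hk1 hkm hDn
        have h7 : sphpP m k D n (n + D) = n * m := by exact_mod_cast h6
        rw [h'] at h4; omega
      · exact h'
    refine sphpG_eq hk1 hkm h5 (by omega) ?_
    have := sphpP_lt hk1 hkm (m := m) (D := D) (n := n)
      (show sphpG m k D n i + 1 < sphpG m k D n i + 1 + 1 by omega)
    omega

end lemmas
set_option maxHeartbeats 1600000 in
theorem sphp_construction {G : Type*} [AddCommGroup G] [Fintype G] (a b : G) (hab : a ≠ b)
    (m n k D : ℕ) (e : ℤ)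
    (hm : 2 ≤ m) (hk1 : 1 ≤ k) (hkm : k < m) (hDn : D ≤ n) (hn1 : 1 ≤ n)
    (hcard : Fintype.card G = n * m)
    (horda : ∀ z : ℤ, z • a = 0 ↔ (m : ℤ) ∣ z)
    (hordb : ∀ z : ℤ, z • b ∈ AddSubgroup.zmultiples a ↔ (n : ℤ) ∣ z)
    (he : (n : ℤ) • b = e • a)
    (hkey : (m : ℤ) ∣ ((sphpP m k D n D : ℤ) - k - n + e)) :
    ∃ v : Fin (Fintype.card G) → G,
      IsHamPath a b (Fintype.card G) v ∧ delta (Fintype.card G) v b = n + D - 1 := by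
  have hNnm : Fintype.card G = n * m := hcard
  have htotZ : (sphpP m k D n (n + D) : ℤ) = n * m := sphpP_total hk1 hkm hDn
  have htot : sphpP m k D n (n + D) = n * m := by exact_mod_cast htotZ
  set w : ℕ → G := fun i =>
    ((i : ℤ) - sphpG m k D n i) • a + (sphpG m k D n i : ℤ) • b with hwdef
  -- the step differences
  have hdiff : ∀ i, i + 1 < Fintype.card G →
      (sphpG m k D n (i + 1) = sphpG m k D n i + 1 ∧ w (i + 1) - w i = b) ∨
      (sphpG m k D n (i + 1) = sphpG m k D n i ∧ w (i + 1) - w i = a) := by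
    intro i h
    have hi : i + 1 < n * m := by omega
    rcases sphpG_step hk1 hkm hDn hi with h0 | h0
    · right
      refine ⟨h0, ?_⟩
      simp only [hwdef]
      rw [h0]
      push_cast
      module
    · left
      refine ⟨h0, ?_⟩
      simp only [hwdef]
      rw [h0]
      push_cast
      module
  -- injectivity
  have hinj : Function.Injective (fun i : Fin (Fintype.card G) => w i) := by
    intro x y heq
    simp only [hwdef] at heq
    set i : ℕ := (x : ℕ) with hidef
    set i' : ℕ := (y : ℕ) with hi'def
    have hi : i < n * m := by rw [← hNnm]; exact x.isLt
    have hi' : i' < n * m := by rw [← hNnm]; exact y.isLt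
    have hP1 : sphpP m k D n (sphpG m k D n i) ≤ i := sphpG_le hk1 hkm i
    have hP2 : i < sphpP m k D n (sphpG m k D n i + 1) := sphpG_ub hk1 hkm hDn hi
    have ht : sphpG m k D n i < n + D := sphpG_lt hk1 hkm hDn hi
    have hP1' : sphpP m k D n (sphpG m k D n i') ≤ i' := sphpG_le hk1 hkm i'
    have hP2' : i' < sphpP m k D n (sphpG m k D n i' + 1) := sphpG_ub hk1 hkm hDn hi'
    have ht' : sphpG m k D n i' < n + D := sphpG_lt hk1 hkm hDn hi'
    have hsucc : sphpP m k D n (sphpG m k D n i + 1)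
        = sphpP m k D n (sphpG m k D n i) + sphpL m k D n (sphpG m k D n i) :=
      sphpP_succ _
    have hsucc' : sphpP m k D n (sphpG m k D n i' + 1)
        = sphpP m k D n (sphpG m k D n i') + sphpL m k D n (sphpG m k D n i') :=
      sphpP_succ _
    have hLle : sphpL m k D n (sphpG m k D n i) ≤ m := sphpL_le hkm _
    have hbz : ((sphpG m k D n i' : ℤ) - sphpG m k D n i) • b =
        (((i : ℤ) - sphpG m k D n i) - ((i' : ℤ) - sphpG m k D n i')) • a := by
      linear_combination (norm := module) -heq
    have hmem : ((sphpG m k D n i' : ℤ) - sphpG m k D n i) • b ∈ AddSubgroup.zmultiples a :=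
      AddSubgroup.mem_zmultiples_iff.mpr ⟨_, hbz.symm⟩
    obtain ⟨c, hc⟩ := (hordb _).mp hmem
    have hcb : c = 0 ∨ c = 1 ∨ c = -1 := by
      have b1 : ((sphpG m k D n i' : ℤ)) < (n : ℤ) + D := by exact_mod_cast ht'
      have b2 : ((sphpG m k D n i : ℤ)) < (n : ℤ) + D := by exact_mod_cast ht
      have b3 : (0 : ℤ) ≤ (sphpG m k D n i : ℤ) := by positivity
      have b4 : (0 : ℤ) ≤ (sphpG m k D n i' : ℤ) := by positivity
      have b5 : (D : ℤ) ≤ n := by exact_mod_cast hDn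
      have b6 : (1 : ℤ) ≤ n := by exact_mod_cast hn1
      rcases le_or_gt 2 c with h | h
      · exfalso; nlinarith
      rcases le_or_gt c (-2) with h' | h'
      · exfalso; nlinarith
      omega
    rcases hcb with rfl | rfl | rfl
    · -- same run
      have htt : sphpG m k D n i' = sphpG m k D n i := by omega
      rw [htt] at heq hP1' hP2'
      have haz : ((i : ℤ) - i') • a = 0 := by
        linear_combination (norm := module) heq
      have hdd := (horda _).mp haz
      have hzero : (i : ℤ) - i' = 0 := by
        refine Int.eq_zero_of_abs_lt_dvd hdd ?_
        rw [abs_lt]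
        constructor <;> omega
      exact Fin.ext (by omega)
    · -- t' = t + n
      exfalso
      have htn : sphpG m k D n i' = n + sphpG m k D n i := by omega
      have htD : sphpG m k D n i < D := by omega
      rw [htn] at heq hP1' hP2' hsucc'
      have haz : ((i : ℤ) - i' + n - e) • a = 0 := by
        push_cast at heq ⊢
        linear_combination (norm := module) heq + he
      have hdd := (horda _).mp haz
      have hF := sphp_F3 hk1 hkm hDn hkey htD
      have hL' : sphpL m k D n (n + sphpG m k D n i) = m - sphpL m k D n (sphpG m k D n i) :=
        sphpL_shift hkm hDn htD
      have hsum : (m : ℤ) ∣ ((i : ℤ) - i' + sphpP m k D n (n + sphpG m k D n i)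
          - sphpP m k D n (sphpG m k D n i) - sphpL m k D n (sphpG m k D n i)) := by
        have heq2 : ((i : ℤ) - i' + n - e) +
            ((sphpP m k D n (n + sphpG m k D n i) : ℤ) - sphpP m k D n (sphpG m k D n i)
              - sphpL m k D n (sphpG m k D n i) - n + e) =
            ((i : ℤ) - i' + sphpP m k D n (n + sphpG m k D n i)
              - sphpP m k D n (sphpG m k D n i) - sphpL m k D n (sphpG m k D n i)) := by ring
        rw [← heq2]
        exact dvd_add hdd hF
      have hLpos : 1 ≤ sphpL m k D n (sphpG m k D n i) := sphpL_pos hk1 hkm _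
      rw [hL'] at hsucc'
      have hzero := Int.eq_zero_of_abs_lt_dvd hsum (by rw [abs_lt]; constructor <;> omega)
      omega
    · -- t = t' + n
      exfalso
      have htn : sphpG m k D n i = n + sphpG m k D n i' := by omega
      have htD : sphpG m k D n i' < D := by omega
      rw [htn] at heq hP1 hP2 hsucc
      have haz : ((i : ℤ) - i' - n + e) • a = 0 := by
        push_cast at heq ⊢
        linear_combination (norm := module) heq - he
      have hdd := (horda _).mp haz
      have hF := sphp_F3 hk1 hkm hDn hkey htD
      have hL' : sphpL m k D n (n + sphpG m k D n i') = m - sphpL m k D n (sphpG m k D n i') :=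
        sphpL_shift hkm hDn htD
      have hsum : (m : ℤ) ∣ ((i : ℤ) - i' - sphpP m k D n (n + sphpG m k D n i')
          + sphpP m k D n (sphpG m k D n i') + sphpL m k D n (sphpG m k D n i')) := by
        have heq2 : ((i : ℤ) - i' - n + e) -
            ((sphpP m k D n (n + sphpG m k D n i') : ℤ) - sphpP m k D n (sphpG m k D n i')
              - sphpL m k D n (sphpG m k D n i') - n + e) =
            ((i : ℤ) - i' - sphpP m k D n (n + sphpG m k D n i')
              + sphpP m k D n (sphpG m k D n i') + sphpL m k D n (sphpG m k D n i')) := by ring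
        rw [← heq2]
        exact dvd_sub hdd hF
      have hLpos : 1 ≤ sphpL m k D n (sphpG m k D n i') := sphpL_pos hk1 hkm _
      have hLle' : sphpL m k D n (sphpG m k D n i') ≤ m := sphpL_le hkm _
      rw [hL'] at hsucc
      have hzero := Int.eq_zero_of_abs_lt_dvd hsum (by rw [abs_lt]; constructor <;> omega)
      omega
  refine ⟨fun i : Fin (Fintype.card G) => w i, ⟨?_, ?_⟩, ?_⟩
  · -- bijective
    rw [Fintype.bijective_iff_injective_and_card]
    exact ⟨hinj, by simp⟩
  · -- steps
    intro i h
    rcases hdiff i h with ⟨_, hd⟩ | ⟨_, hd⟩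
    · have : w (i + 1) - w i ∈ ({a, b} : Set G) := by rw [hd]; exact Or.inr rfl
      exact this
    · have : w (i + 1) - w i ∈ ({a, b} : Set G) := by rw [hd]; exact Or.inl rfl
      exact this
  · -- delta count
    have hset : {i : ℕ | ∃ h : i + 1 < Fintype.card G, w (i + 1) - w i = b} =
        ↑((Finset.Icc 1 (n + D - 1)).image fun t => sphpP m k D n t - 1) := by
      ext i
      simp only [Set.mem_setOf_eq, Finset.coe_image, Set.mem_image, Finset.mem_coe,
        Finset.mem_Icc]
      constructor
      · rintro ⟨h, hbb⟩
        have hi : i + 1 < n * m := by omega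
        rcases hdiff i h with ⟨hgg, hd⟩ | ⟨hgg, hd⟩
        swap
        · exact absurd (hd.symm.trans hbb) hab
        refine ⟨sphpG m k D n (i + 1), ⟨by omega, ?_⟩, ?_⟩
        · have := sphpG_lt hk1 hkm hDn hi
          omega
        · have h1 : sphpP m k D n (sphpG m k D n (i + 1)) ≤ i + 1 := sphpG_le hk1 hkm (i + 1)
          have h2 : i < sphpP m k D n (sphpG m k D n i + 1) :=
            sphpG_ub hk1 hkm hDn (by omega)
          rw [← hgg] at h2
          omega
      · rintro ⟨t, ⟨ht1, ht2⟩, rfl⟩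
        have htP : 0 < sphpP m k D n t := by
          have : sphpP m k D n 0 < sphpP m k D n t := sphpP_lt hk1 hkm (by omega)
          simpa using this
        have hi1 : sphpP m k D n t - 1 + 1 = sphpP m k D n t := by omega
        have hlt : sphpP m k D n t < n * m := by
          rw [← htot]
          exact sphpP_lt hk1 hkm (by omega)
        have h : sphpP m k D n t - 1 + 1 < Fintype.card G := by omega
        have hg1 : sphpG m k D n (sphpP m k D n t - 1 + 1) = t := by
          rw [hi1]
          refine sphpG_eq hk1 hkm (by omega) le_rfl ?_
          rw [sphpP_succ]
          have := sphpL_pos hk1 hkm (m := m) (D := D) (n := n) t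
          omega
        have hg0 : sphpG m k D n (sphpP m k D n t - 1) = t - 1 := by
          have hlt2 : sphpP m k D n (t - 1) < sphpP m k D n t := sphpP_lt hk1 hkm (by omega)
          have ht11 : t - 1 + 1 = t := by omega
          refine sphpG_eq hk1 hkm (by omega) (by omega) ?_
          rw [ht11]
          omega
        refine ⟨h, ?_⟩
        rcases hdiff (sphpP m k D n t - 1) h with ⟨_, hd⟩ | ⟨hgg, hd⟩
        · exact hd
        · rw [hg1, hg0] at hgg
          omega
    have hcalc : delta (Fintype.card G) (fun i : Fin (Fintype.card G) => w i) b =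
        Set.ncard {i : ℕ | ∃ h : i + 1 < Fintype.card G, w (i + 1) - w i = b} := by
      rw [delta, ← Nat.card_coe_set_eq]
      rfl
    rw [hcalc, hset, Set.ncard_coe_finset]
    rw [Finset.card_image_of_injOn, Nat.card_Icc]
    · omega
    · intro t1 h1 t2 h2 hh
      simp only [Finset.coe_Icc, Set.mem_Icc] at h1 h2
      have hh' : sphpP m k D n t1 - 1 = sphpP m k D n t2 - 1 := hh
      have e1 : 0 < sphpP m k D n t1 := by
        have : sphpP m k D n 0 < sphpP m k D n t1 := sphpP_lt hk1 hkm (by omega)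
        simpa using this
      have e2 : 0 < sphpP m k D n t2 := by
        have : sphpP m k D n 0 < sphpP m k D n t2 := sphpP_lt hk1 hkm (by omega)
        simpa using this
      rcases lt_trichotomy t1 t2 with h | h | h
      · have := sphpP_lt hk1 hkm (m := m) (D := D) (n := n) h
        omega
      · exact h
      · have := sphpP_lt hk1 hkm (m := m) (D := D) (n := n) h
        omega

/-- Let `m` be the order of `a` and `n = |G|/m`. If `m ≥ 2` then there is
`n' ∈ {n−1, n}` such that for every `i ∈ {n', n'+2, …, n' + 2⌊(n−1)/2⌋}` there is a
hamiltonian path `P` in `Cay(G; a, b)` with `δ_b(P) = i`. -/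
theorem string_of_hamiltonian_paths {G : Type*} [AddCommGroup G] [Fintype G] (a b : G)
    (hab : a ≠ b) (hgen : AddSubgroup.closure {a, b} = ⊤)
    (m n : ℕ) (hma : m = addOrderOf a) (hn : n = Fintype.card G / m)
    (hm : 2 ≤ m) :
    ∃ n' : ℕ, (n' = n - 1 ∨ n' = n) ∧
      ∀ j : ℕ, j ≤ (n - 1) / 2 →
        ∃ v : Fin (Fintype.card G) → G,
          IsHamPath a b (Fintype.card G) v ∧ delta (Fintype.card G) v b = n' + 2 * j := by
    classical
  have hm1 : 0 < m := by omega
  set H := AddSubgroup.zmultiples a with hHdef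
  set π := QuotientAddGroup.mk' H with hπdef
  have hsurj : Function.Surjective π := QuotientAddGroup.mk'_surjective H
  have hHm : Nat.card H = m := by rw [hma]; exact Nat.card_zmultiples a
  have hcards : Nat.card G = Nat.card (G ⧸ H) * Nat.card H :=
    AddSubgroup.card_eq_card_quotient_mul_card_addSubgroup H
  have hπa : π a = 0 := by
    rw [hπdef, QuotientAddGroup.mk'_apply, QuotientAddGroup.eq_zero_iff]
    exact AddSubgroup.mem_zmultiples a
  have htop : AddSubgroup.zmultiples (π b) = ⊤ := by
    have h1 : AddSubgroup.map π (AddSubgroup.closure {a, b}) =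
        AddSubgroup.closure (π '' {a, b}) := AddMonoidHom.map_closure π {a, b}
    rw [hgen, AddSubgroup.map_top_of_surjective π hsurj] at h1
    have h2 : AddSubgroup.closure (π '' {a, b}) ≤ AddSubgroup.zmultiples (π b) := by
      rw [AddSubgroup.closure_le]
      intro x hx
      rcases hx with ⟨y, hy, rfl⟩
      rcases hy with rfl | rfl
      · rw [hπa]; exact zero_mem _
      · exact AddSubgroup.mem_zmultiples _
    exact le_antisymm le_top (h1 ▸ h2)
  have hbord : addOrderOf (π b) = Nat.card (G ⧸ H) := by
    rw [← Nat.card_zmultiples (π b), htop]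
    exact Nat.card_congr AddSubgroup.topEquiv.toEquiv
  have hQn : Nat.card (G ⧸ H) = n := by
    have h1 : Fintype.card G = Nat.card (G ⧸ H) * m := by
      rw [← Nat.card_eq_fintype_card, hcards, hHm]
    rw [hn, h1, Nat.mul_div_cancel _ hm1]
  have hn1 : 1 ≤ n := by
    have : Nat.card (G ⧸ H) ≠ 0 := Nat.card_pos.ne'
    omega
  have hcard : Fintype.card G = n * m := by
    rw [← Nat.card_eq_fintype_card, hcards, hHm, hQn]
  have horda : ∀ z : ℤ, z • a = 0 ↔ (m : ℤ) ∣ z := by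
    intro z
    rw [hma]
    exact (addOrderOf_dvd_iff_zsmul_eq_zero).symm
  have hordb : ∀ z : ℤ, z • b ∈ H ↔ (n : ℤ) ∣ z := by
    intro z
    have h1 : z • b ∈ H ↔ π (z • b) = 0 := by
      rw [hπdef, QuotientAddGroup.mk'_apply, QuotientAddGroup.eq_zero_iff]
    rw [h1, map_zsmul]
    rw [← addOrderOf_dvd_iff_zsmul_eq_zero, hbord, hQn]
  obtain ⟨e, he⟩ : ∃ e : ℤ, e • a = (n : ℤ) • b := by
    have : (n : ℤ) • b ∈ H := (hordb n).mpr dvd_rfl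
    exact AddSubgroup.mem_zmultiples_iff.mp this
  set k0 : ℤ := (e - n) % m with hk0def
  have hmz : (0 : ℤ) < m := by exact_mod_cast hm1
  have hk0a : 0 ≤ k0 := Int.emod_nonneg _ (by omega)
  have hk0b : k0 < m := Int.emod_lt_of_pos _ hmz
  have hk0dvd : (m : ℤ) ∣ (e - n - k0) := by
    have := Int.emod_add_mul_ediv (e - n) (m : ℤ)
    exact ⟨(e - n) / m, by omega⟩
  by_cases hc : k0 = 0
  · refine ⟨n, Or.inr rfl, ?_⟩
    intro j hj
    have hD : 2 * j + 1 ≤ n := by omega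
    have hkey : (m : ℤ) ∣ ((sphpP m 1 (2 * j + 1) n (2 * j + 1) : ℤ) - 1 - n + e) := by
      have hP : sphpP m 1 (2 * j + 1) n (2 * j + 1) = j * m + 1 := by
        rw [sphpP_phase1 hm (m := m) (k := 1) (D := 2 * j + 1) (n := n) (2 * j + 1) le_rfl]
        have h1 : (2 * j + 1) / 2 = j := by omega
        have h2 : (2 * j + 1) % 2 = 1 := by omega
        rw [h1, h2]
      rw [hP]
      push_cast
      have hk0dvd' : (m : ℤ) ∣ (e - n) := by
        have := hk0dvd
        rw [hc, sub_zero] at this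
        exact this
      have h9 : ((j : ℤ) * m + 1) - 1 - n + e = (e - n) + j * m := by ring
      rw [h9]
      exact dvd_add hk0dvd' ⟨j, by ring⟩
    obtain ⟨v, h1, h2⟩ := sphp_construction a b hab m n 1 (2 * j + 1) e hm le_rfl hm hD hn1
      hcard horda hordb he.symm hkey
    exact ⟨v, h1, by rw [h2]; omega⟩
  · refine ⟨n - 1, Or.inl rfl, ?_⟩
    intro j hj
    set k : ℕ := k0.toNat with hkdef
    have hk1 : 1 ≤ k := by omega
    have hkm : k < m := by omega
    have hD : 2 * j ≤ n := by omega
    have hkey : (m : ℤ) ∣ ((sphpP m k (2 * j) n (2 * j) : ℤ) - k - n + e) := by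
      have hP : sphpP m k (2 * j) n (2 * j) = j * m := by
        rw [sphpP_phase1 hkm (m := m) (k := k) (D := 2 * j) (n := n) (2 * j) le_rfl]
        have h1 : (2 * j) / 2 = j := by omega
        have h2 : (2 * j) % 2 = 0 := by omega
        rw [h1, h2]; ring
      rw [hP]
      push_cast
      have hkk : (k : ℤ) = k0 := by omega
      rw [hkk]
      have h9 : ((j : ℤ) * m) - k0 - n + e = (e - n - k0) + j * m := by ring
      rw [h9]
      exact dvd_add hk0dvd ⟨j, by ring⟩
    obtain ⟨v, h1, h2⟩ := sphp_construction a b hab m n k (2 * j) e hm hk1 hkm hD hn1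
      hcard horda hordb he.symm hkey
    exact ⟨v, h1, by rw [h2]; omega⟩
end

section
/- Let a, b ∈ ℤ with a ≠ b. The Cayley digraph Cay(ℤ; a, b) has two arc-disjoint two-way infinite hamiltonian paths if and only if a and b are both odd and either {a, b} = {1, −1} or a + b = ±2. -/
/-- `v : ℤ → G` is a two-way infinite hamiltonian path of the Cayley digraph
`Cay(G; a, b)`. -/
def IsZHamPath {G : Type*} [AddCommGroup G] (a b : G) (v : ℤ → G) : Prop :=
  Function.Bijective v ∧ ∀ i : ℤ, v (i + 1) - v i ∈ ({a, b} : Set G)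

/-- The arc set of a two-way infinite path. -/
def ZArcSet {G : Type*} (v : ℤ → G) : Set (G × G) :=
  {p | ∃ i : ℤ, p = (v i, v (i + 1))}

/-!
Cut ℤ between `0` and `1` and count the arcs of a path crossing the cut upwards minus those
crossing it downwards. A hamiltonian path with bounded steps crosses the cut only finitely often,
and its two ends lie on opposite sides, since both sides are infinite: its net crossing number
is `±1`. Two arc-disjoint hamiltonian paths leave every vertex by different steps, so together
they use every arc of `Cay(ℤ; a, b)` exactly once; as the arcs of step `s` cross the cut `s`
times net, `a + b ∈ {-2, 0, 2}`. A hamiltonian path also forces `a` and `b` to generate `ℤ`;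
coprimality then gives that `a`, `b` are odd, and `{a, b} = {1, -1}` when `a + b = 0`.
Conversely, for `a + b = ±2` the paths alternating the steps `a, b` and `b, a` are arc-disjoint,
and for `{a, b} = {1, -1}` so are `i ↦ i` and `i ↦ -i`.
-/

open Finset Function

section Paths

variable {G : Type*} [AddCommGroup G] {a b c d : G} {v : ℤ → G}

theorem isZHamPath_congr (h : ({a, b} : Set G) = {c, d}) :
    IsZHamPath a b v ↔ IsZHamPath c d v := by
  rw [IsZHamPath, IsZHamPath, h]

theorem IsZHamPath.sub_eq_or (hv : IsZHamPath a b v) (i : ℤ) :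
    v (i + 1) - v i = a ∨ v (i + 1) - v i = b := hv.2 i

theorem IsZHamPath.closure_eq_top (hv : IsZHamPath a b v) :
    AddSubgroup.closure {a, b} = ⊤ := by
  set H := AddSubgroup.closure ({a, b} : Set G)
  have hstep : ∀ i, v (i + 1) - v i ∈ H := fun i => AddSubgroup.subset_closure (hv.2 i)
  have hmem : ∀ i, v i - v 0 ∈ H := by
    intro i
    induction i using Int.induction_on with
    | zero => simp
    | succ k ih => simpa using H.add_mem (hstep k) ih
    | pred k ih => simpa using H.sub_mem ih (hstep (-k - 1))
  refine eq_top_iff.mpr fun g _ => ?_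
  obtain ⟨i, hi⟩ := hv.1.2 (g + v 0)
  simpa [hi] using hmem i

end Paths

theorem disjoint_zArcSet_of_ne {G : Type*} [Add G] [IsLeftCancelAdd G] {v v' : ℤ → G}
    {f g : G → G} (hv : ∀ i, v (i + 1) = v i + f (v i))
    (hv' : ∀ i, v' (i + 1) = v' i + g (v' i)) (hfg : ∀ x, f x ≠ g x) :
    Disjoint (ZArcSet v) (ZArcSet v') := by
  refine Set.disjoint_left.mpr ?_
  rintro _ ⟨i, rfl⟩ ⟨j, hij⟩
  rw [Prod.mk.injEq] at hij
  refine hfg (v i) (add_left_cancel (a := v i) ?_)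
  rw [← hv, hij.2, hv', ← hij.1]

theorem IsZHamPath.isCoprime {a b : ℤ} {v : ℤ → ℤ} (hv : IsZHamPath a b v) : IsCoprime a b := by
  have h1 : (1 : ℤ) ∈ AddSubgroup.closure {a, b} := hv.closure_eq_top ▸ AddSubgroup.mem_top 1
  obtain ⟨m, n, h⟩ := AddSubgroup.mem_closure_pair.mp h1
  exact ⟨m, n, by simpa using h⟩

theorem Int.odd_of_isCoprime_of_even_add {a b : ℤ} (h : IsCoprime a b) (hab : Even (a + b)) :
    Odd a := by
  by_contra ha
  rw [Int.not_odd_iff_even] at ha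
  have hb : Even b := by simpa using hab.sub ha
  have := h.isUnit_of_dvd' ha.two_dvd hb.two_dvd
  norm_num [Int.isUnit_iff] at this

theorem Int.pair_eq_one_neg_one_of_isCoprime {a b : ℤ} (h : IsCoprime a b) (hab : a + b = 0) :
    ({a, b} : Set ℤ) = {1, -1} := by
  obtain rfl : b = -a := by omega
  rw [IsCoprime.neg_right_iff, isCoprime_self, Int.isUnit_iff] at h
  rcases h with rfl | rfl
  · rfl
  · simp [Set.pair_comm]

theorem Int.sum_Ico_sub {M : Type*} [AddCommGroup M] (f : ℤ → M) {m n : ℤ} (h : m ≤ n) :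
    ∑ i ∈ Ico m n, (f (i + 1) - f i) = f n - f m := by
  induction n, h using Int.leInduction with
  | base => simp
  | succ n hmn ih =>
    rw [← insert_Ico_right_eq_Ico_add_one hmn, sum_insert (by simp), ih]
    abel

def side (x : ℤ) : ℤ := if 0 < x then 1 else 0

theorem side_add_of_notMem {M d x : ℤ} (hd : |d| ≤ M) (hx : x ∉ Icc (-M) M) :
    side (x + d) = side x := by
  rw [mem_Icc] at hx
  rw [abs_le] at hd
  unfold side
  split_ifs <;> omega

theorem sum_side_add_sub {M d : ℤ} (hd : |d| ≤ M) :
    ∑ x ∈ Icc (-M) M, (side (x + d) - side x) = d := by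
  rw [abs_le] at hd
  have hcount : ∀ e, -M ≤ e → e ≤ M → ∑ x ∈ Icc (-M) M, side (x + e) = M + e := by
    intro e he he'
    have hfilter : {x ∈ Icc (-M) M | 0 < x + e} = Icc (1 - e) M := by
      ext x
      simp only [mem_filter, mem_Icc]
      omega
    simp only [side]
    rw [sum_boole, hfilter, Int.card_Icc]
    omega
  have h0 := hcount 0 (by omega) (by omega)
  simp only [add_zero] at h0
  rw [sum_sub_distrib, hcount d hd.1 hd.2, h0]
  ring

theorem setOf_side_ne_infinite (c : ℤ) : {x | side x ≠ c}.Infinite := by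
  by_cases hc : c = 0
  · refine (Set.Ioi_infinite 0).mono fun x hx => ?_
    simp_all [side]
  · refine (Set.Iic_infinite 0).mono fun x hx => ?_
    rw [Set.mem_Iic] at hx
    simp [side, not_lt.mpr hx, Ne.symm hc]

theorem side_ne_of_bijective {v : ℤ → ℤ} (hv : Bijective v) {L U : ℤ}
    (hflat : ∀ i, i < L ∨ U ≤ i → side (v (i + 1)) = side (v i)) :
    side (v U) ≠ side (v L) := by
  intro heq
  have hup : ∀ i, U ≤ i → side (v i) = side (v U) := by
    intro i hi
    induction i, hi using Int.leInduction with
    | base => rfl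
    | succ n hn ih => rw [hflat n (Or.inr hn), ih]
  have hlow : ∀ i ≤ L, side (v i) = side (v L) := by
    intro i hi
    induction i, hi using Int.leInductionDown with
    | base => rfl
    | pred n hn ih => rw [← ih, ← hflat (n - 1) (Or.inl (by omega)), sub_add_cancel]
  refine setOf_side_ne_infinite (side (v L)) (((Set.finite_Ioo L U).image v).subset ?_)
  intro x hx
  obtain ⟨i, rfl⟩ := hv.2 x
  refine ⟨i, ⟨?_, ?_⟩, rfl⟩
  · by_contra h
    exact hx (hlow i (not_lt.mp h))
  · by_contra h
    exact hx (heq ▸ hup i (not_lt.mp h))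

noncomputable def outStep (v : ℤ → ℤ) (x : ℤ) : ℤ := v (invFun v x + 1) - x

theorem outStep_apply {v : ℤ → ℤ} (hv : Injective v) (i : ℤ) :
    outStep v (v i) = v (i + 1) - v i := by
  rw [outStep, leftInverse_invFun hv i]

theorem sum_side_outStep_eq_sub {v : ℤ → ℤ} (hv : Bijective v) {W : Finset ℤ} {L U : ℤ}
    (hLU : L ≤ U) (hW : ∀ i, v i ∈ W → L ≤ i ∧ i < U)
    (hflat : ∀ i, v i ∉ W → side (v (i + 1)) = side (v i)) :
    ∑ x ∈ W, (side (x + outStep v x) - side x) = side (v U) - side (v L) := by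
  have hsub : W ⊆ (Ico L U).image v := by
    intro x hx
    obtain ⟨i, rfl⟩ := hv.2 x
    exact mem_image_of_mem v (mem_Ico.mpr (hW i hx))
  rw [sum_subset hsub, sum_image hv.1.injOn, ← Int.sum_Ico_sub (fun i => side (v i)) hLU]
  · refine sum_congr rfl fun i _ => ?_
    rw [outStep_apply hv.1, add_sub_cancel]
  · rintro _ hx hxW
    obtain ⟨i, -, rfl⟩ := mem_image.mp hx
    rw [outStep_apply hv.1, add_sub_cancel, hflat i hxW, sub_self]

theorem sum_side_outStep_eq_one_or_neg_one {v : ℤ → ℤ} {M : ℤ} (hv : Bijective v)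
    (hM : ∀ i, |v (i + 1) - v i| ≤ M) :
    ∑ x ∈ Icc (-M) M, (side (x + outStep v x) - side x) = 1 ∨
      ∑ x ∈ Icc (-M) M, (side (x + outStep v x) - side x) = -1 := by
  have hflat : ∀ i, v i ∉ Icc (-M) M → side (v (i + 1)) = side (v i) := fun i hi => by
    simpa using side_add_of_notMem (hM i) hi
  have hfin : (v ⁻¹' Icc (-M) M).Finite := (Icc (-M) M).finite_toSet.preimage hv.1.injOn
  obtain ⟨U, hU⟩ := hfin.bddAbove
  obtain ⟨L, hL⟩ := hfin.bddBelow
  have hW : ∀ i, v i ∈ Icc (-M) M → L ≤ i ∧ i < U + 1 := fun i hi =>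
    ⟨hL hi, Int.lt_add_one_of_le (hU hi)⟩
  have hLU : L ≤ U + 1 := by
    obtain ⟨i, hi⟩ := hv.2 0
    have := hW i (by simpa [hi] using (abs_nonneg _).trans (hM 0))
    omega
  have hne := side_ne_of_bijective hv (L := L) (U := U + 1) fun i hi =>
    hflat i fun hiW => by have := hW i hiW; omega
  rw [sum_side_outStep_eq_sub hv hLU hW hflat]
  unfold side at hne ⊢
  split_ifs at hne ⊢ <;> omega

theorem IsZHamPath.outStep_eq_or {a b : ℤ} {v : ℤ → ℤ} (hv : IsZHamPath a b v) (x : ℤ) :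
    outStep v x = a ∨ outStep v x = b := by
  obtain ⟨i, rfl⟩ := hv.1.2 x
  rw [outStep_apply hv.1.1]
  exact hv.sub_eq_or i

theorem outStep_ne_of_disjoint {v v' : ℤ → ℤ} (hv : Bijective v) (hv' : Bijective v')
    (hd : Disjoint (ZArcSet v) (ZArcSet v')) (x : ℤ) : outStep v x ≠ outStep v' x := by
  intro h
  obtain ⟨i, rfl⟩ := hv.2 x
  obtain ⟨j, hj⟩ := hv'.2 (v i)
  rw [outStep_apply hv.1, ← hj, outStep_apply hv'.1, sub_left_inj] at h
  exact Set.disjoint_left.mp hd ⟨i, rfl⟩ ⟨j, by rw [hj, h]⟩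

theorem add_eq_add_of_ne {M α : Type*} [AddCommMagma M] (φ : α → M) {s t a b : α}
    (hs : s = a ∨ s = b) (ht : t = a ∨ t = b) (hst : s ≠ t) : φ s + φ t = φ a + φ b := by
  rcases hs with rfl | rfl <;> rcases ht with rfl | rfl
  · exact absurd rfl hst
  · rfl
  · exact add_comm _ _
  · exact absurd rfl hst

theorem IsZHamPath.abs_sub_le {a b : ℤ} {v : ℤ → ℤ} (hv : IsZHamPath a b v) (i : ℤ) :
    |v (i + 1) - v i| ≤ max |a| |b| := by
  rcases hv.sub_eq_or i with h | h <;> rw [h]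
  exacts [le_max_left _ _, le_max_right _ _]

theorem IsZHamPath.add_eq_of_disjoint {a b : ℤ} {v v' : ℤ → ℤ} (hv : IsZHamPath a b v)
    (hv' : IsZHamPath a b v') (hd : Disjoint (ZArcSet v) (ZArcSet v')) :
    a + b = 2 ∨ a + b = 0 ∨ a + b = -2 := by
  have hsum : ∑ x ∈ Icc (-max |a| |b|) (max |a| |b|),
      ((side (x + outStep v x) - side x) + (side (x + outStep v' x) - side x)) = a + b := by
    rw [sum_congr rfl fun x _ => add_eq_add_of_ne (fun s => side (x + s) - side x)
      (hv.outStep_eq_or x) (hv'.outStep_eq_or x) (outStep_ne_of_disjoint hv.1 hv'.1 hd x),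
      sum_add_distrib, sum_side_add_sub (le_max_left _ _), sum_side_add_sub (le_max_right _ _)]
  rw [sum_add_distrib] at hsum
  rcases sum_side_outStep_eq_one_or_neg_one hv.1 hv.abs_sub_le with h | h <;>
    rcases sum_side_outStep_eq_one_or_neg_one hv'.1 hv'.abs_sub_le with h' | h' <;> omega

/-- `zigzag a b (2 * k) = k * (a + b)` and `zigzag a b (2 * k + 1) = k * (a + b) + a`. -/
def zigzag (a b : ℤ) (i : ℤ) : ℤ := i / 2 * (a + b) + if Even i then 0 else a

theorem zigzag_add_one (a b i : ℤ) :
    zigzag a b (i + 1) = zigzag a b i + if Even i then a else b := by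
  rcases Int.even_or_odd' i with ⟨k, rfl | rfl⟩
  · have h1 : (2 * k + 1) / 2 = k := by omega
    have h2 : 2 * k / 2 = k := by omega
    have hodd : ¬Even (2 * k + 1) := Int.not_even_iff_odd.mpr (odd_two_mul_add_one k)
    simp only [zigzag, h1, h2, if_neg hodd, if_pos (even_two_mul k)]
    ring
  · have h1 : (2 * k + 1 + 1) / 2 = k + 1 := by omega
    have h2 : (2 * k + 1) / 2 = k := by omega
    have hodd : ¬Even (2 * k + 1) := Int.not_even_iff_odd.mpr (odd_two_mul_add_one k)
    have heven : Even (2 * k + 1 + 1) := ⟨k + 1, by ring⟩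
    simp only [zigzag, h1, h2, if_neg hodd, if_pos heven]
    ring

theorem even_zigzag_iff {a b : ℤ} (ha : Odd a) (hs : Even (a + b)) (i : ℤ) :
    Even (zigzag a b i) ↔ Even i := by
  have h : Even (i / 2 * (a + b)) := hs.mul_left _
  by_cases hi : Even i
  · simp [zigzag, hi, h]
  · simp [zigzag, hi, h.add_odd ha, Int.not_even_iff_odd]

theorem zigzag_bijective {a b : ℤ} (ha : Odd a) (hs : a + b = 2 ∨ a + b = -2) :
    Bijective (zigzag a b) := by
  obtain ⟨k, rfl⟩ := ha
  constructor
  · intro i j h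
    simp only [zigzag, Int.even_iff] at h
    rcases hs with hs | hs <;> rw [hs] at h <;> split_ifs at h <;> omega
  · intro x
    rcases hs with hs | hs
    · refine ⟨if Even x then x else x - (2 * k + 1) + 1, ?_⟩
      simp only [zigzag, Int.even_iff, hs]
      split_ifs <;> omega
    · refine ⟨if Even x then -x else 2 * k + 1 - x + 1, ?_⟩
      simp only [zigzag, Int.even_iff, hs]
      split_ifs <;> omega

theorem isZHamPath_zigzag {a b : ℤ} (ha : Odd a) (hs : a + b = 2 ∨ a + b = -2) :
    IsZHamPath a b (zigzag a b) :=
  ⟨zigzag_bijective ha hs, fun i => by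
    rw [zigzag_add_one, add_sub_cancel_left]
    split_ifs <;> simp⟩

theorem exists_disjoint_zHamPaths_of_add_eq {a b : ℤ} (hab : a ≠ b) (ha : Odd a)
    (hs : a + b = 2 ∨ a + b = -2) :
    ∃ v v' : ℤ → ℤ, IsZHamPath a b v ∧ IsZHamPath a b v' ∧
      Disjoint (ZArcSet v) (ZArcSet v') := by
  have hs' : b + a = 2 ∨ b + a = -2 := by rwa [add_comm]
  have heven : Even (a + b) := by rcases hs with h | h <;> rw [h] <;> decide
  have hb : Odd b := by simpa using heven.sub_odd ha
  refine ⟨zigzag a b, zigzag b a, isZHamPath_zigzag ha hs,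
    (isZHamPath_congr (Set.pair_comm b a)).mp (isZHamPath_zigzag hb hs'),
    disjoint_zArcSet_of_ne (f := fun x => if Even x then a else b)
      (g := fun x => if Even x then b else a) (fun i => ?_) (fun i => ?_) (fun x => ?_)⟩
  · simp only [zigzag_add_one, even_zigzag_iff ha heven]
  · simp only [zigzag_add_one, even_zigzag_iff hb (by rwa [add_comm])]
  · split_ifs
    exacts [hab, hab.symm]

theorem exists_disjoint_zHamPaths_of_pair_eq {a b : ℤ} (h : ({a, b} : Set ℤ) = {1, -1}) :
    ∃ v v' : ℤ → ℤ, IsZHamPath a b v ∧ IsZHamPath a b v' ∧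
      Disjoint (ZArcSet v) (ZArcSet v') := by
  simp only [isZHamPath_congr h]
  refine ⟨id, Neg.neg, ⟨bijective_id, fun i => by simp⟩, ⟨neg_bijective, fun i => by simp⟩,
    disjoint_zArcSet_of_ne (f := fun _ => 1) (g := fun _ => -1) (fun i => rfl)
      (fun i => by ring) (fun _ => by decide)⟩

/-- For distinct integers `a`, `b`, the Cayley digraph `Cay(ℤ; a, b)` has two
arc-disjoint two-way infinite hamiltonian paths iff `a` and `b` are odd and either
`{a, b} = {1, −1}` or `a + b = ±2`. -/
theorem arc_disjoint_two_way_infinite_int (a b : ℤ) (hab : a ≠ b) :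
    (∃ v v' : ℤ → ℤ, IsZHamPath a b v ∧ IsZHamPath a b v' ∧
        Disjoint (ZArcSet v) (ZArcSet v')) ↔
      (Odd a ∧ Odd b ∧
        (({a, b} : Set ℤ) = {1, -1} ∨ a + b = 2 ∨ a + b = -2)) := by
  constructor
  · rintro ⟨v, v', hv, hv', hd⟩
    have hcop : IsCoprime a b := hv.isCoprime
    have hsum := hv.add_eq_of_disjoint hv' hd
    have heven : Even (a + b) := by rcases hsum with h | h | h <;> rw [h] <;> decide
    refine ⟨Int.odd_of_isCoprime_of_even_add hcop heven,
      Int.odd_of_isCoprime_of_even_add hcop.symm (by rwa [add_comm]), ?_⟩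
    rcases hsum with h | h | h
    · exact Or.inr (Or.inl h)
    · exact Or.inl (Int.pair_eq_one_neg_one_of_isCoprime hcop h)
    · exact Or.inr (Or.inr h)
  · rintro ⟨ha, -, h | h⟩
    · exact exists_disjoint_zHamPaths_of_pair_eq h
    · exact exists_disjoint_zHamPaths_of_add_eq hab ha h
end
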